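/- arXiv:1611.00093 — 11 statements merged into one kernel-verified Lean document; each statement's English description precedes it below -/
import Mathlib

section
/- Let Ξ ⊆ ℝ^{1+dT} be convex and let ξ(k,t) ∈ ℝ^d (k = 0,…,K−1, t = 0,…,T−1) satisfy quasi-stationarity. Then for every t ∈ {0,…,T−1} and every k ∈ {0,…,K−1}, the vector (1, ξ̄(0), …, ξ̄(t−1), ξ(k,t), ξ(k,t+1), …, ξ(k,T−1)) lies in Ξ, where ξ̄(s) = (1/K)·Σ_{ℓ=0}^{K−1} ξ(ℓ,s). -/
/-- Slow time-scale average `ξ̄(t) = (1/K)·Σ_{ℓ=0}^{K−1} ξ(ℓ,t)` of a fast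
time-scale disturbance process `ξ(k,t)`. -/
noncomputable def slowAvg {ι : Type*} (K : ℕ) (ξ : ℕ → ℕ → ι → ℝ) (t : ℕ) :
    ι → ℝ :=
  (K : ℝ)⁻¹ • ∑ ℓ ∈ Finset.range K, ξ ℓ t

lemma aux_induction (d T K : ℕ) (hK : 0 < K)
    (Ξ : Set (ℝ × (Fin T → Fin d → ℝ))) (hconv : Convex ℝ Ξ)
    (ξ : ℕ → ℕ → Fin d → ℝ)
    (hquasi : ∀ f : ℕ → ℕ, (∀ t, f t < K) →
      ((1 : ℝ), fun t : Fin T => ξ (f t) t) ∈ Ξ)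
    (t : ℕ) :
    ∀ g : ℕ → ℕ, (∀ s, g s < K) →
      ((1 : ℝ), fun s : Fin T =>
        if (s : ℕ) < t then slowAvg K ξ s else ξ (g s) s) ∈ Ξ := by
  induction t with
  | zero =>
      intro g hg
      simpa using hquasi g hg
  | succ t ih =>
      intro g hg
      -- points: replace the value at time `t` by ℓ
      set v : ℕ → ℝ × (Fin T → Fin d → ℝ) := fun ℓ =>
        ((1 : ℝ), fun s : Fin T =>
          if (s : ℕ) < t then slowAvg K ξ s
          else ξ ((fun s' => if s' = t then ℓ else g s') s) s) with hv
      have hmem : ∀ ℓ ∈ Finset.range K, v ℓ ∈ Ξ := by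
        intro ℓ hℓ
        refine ih (fun s' => if s' = t then ℓ else g s') ?_
        intro s'
        by_cases h : s' = t <;> simp [h, Finset.mem_range.mp hℓ, hg s']
      have hw : ∀ ℓ ∈ Finset.range K, (0 : ℝ) ≤ (K : ℝ)⁻¹ := by
        intro ℓ _; positivity
      have hsum : ∑ _ℓ ∈ Finset.range K, (K : ℝ)⁻¹ = 1 := by
        rw [Finset.sum_const, Finset.card_range, nsmul_eq_mul]
        field_simp
      have hΞ : ∑ ℓ ∈ Finset.range K, (K : ℝ)⁻¹ • v ℓ ∈ Ξ :=
        hconv.sum_mem hw hsum hmem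
      have key : ∑ ℓ ∈ Finset.range K, (K : ℝ)⁻¹ • v ℓ =
          ((1 : ℝ), fun s : Fin T =>
            if (s : ℕ) < t + 1 then slowAvg K ξ s else ξ (g s) s) := by
        have hKne : (K : ℝ) ≠ 0 := Nat.cast_ne_zero.mpr hK.ne'
        apply Prod.ext
        · simp [hv, hsum, ← Finset.sum_smul, Prod.fst_sum]
        · rw [Prod.snd_sum]
          funext s
          rw [Finset.sum_apply]
          by_cases h1 : (s : ℕ) < t
          · have h2 : (s : ℕ) < t + 1 := Nat.lt_succ_of_lt h1
            simp only [hv, Prod.smul_snd, Pi.smul_apply, h1, h2, if_true]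
            rw [← Finset.sum_smul, hsum, one_smul]
          · by_cases h2 : (s : ℕ) = t
            · have h3 : (s : ℕ) < t + 1 := by omega
              simp only [hv, Prod.smul_snd, Pi.smul_apply, h1, if_false, h2,
                if_true, h3, slowAvg]
              simp [Finset.smul_sum]
            · have h3 : ¬ (s : ℕ) < t + 1 := by omega
              simp only [hv, Prod.smul_snd, Pi.smul_apply, h1, if_false, h2,
                if_false, h3]
              rw [← Finset.sum_smul, hsum, one_smul]
      rw [key] at hΞ
      exact hΞ

/-- under quasi-stationarity and convexity of `Ξ`, for every
`t ∈ {0,…,T−1}` and `k ∈ {0,…,K−1}` the vector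
`(1, ξ̄(0), …, ξ̄(t−1), ξ(k,t), …, ξ(k,T−1))` lies in `Ξ`. -/
theorem statement_0 (d T K : ℕ) (hd : 0 < d) (hT : 0 < T) (hK : 0 < K)
    (Ξ : Set (ℝ × (Fin T → Fin d → ℝ))) (hconv : Convex ℝ Ξ)
    (ξ : ℕ → ℕ → Fin d → ℝ)
    (hquasi : ∀ f : ℕ → ℕ, (∀ t, f t < K) →
      ((1 : ℝ), fun t : Fin T => ξ (f t) t) ∈ Ξ)
    (t : ℕ) (ht : t < T) (k : ℕ) (hk : k < K) :
    ((1 : ℝ), fun s : Fin T =>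
      if (s : ℕ) < t then slowAvg K ξ s else ξ k s) ∈ Ξ := by
  exact aux_induction d T K hK Ξ hconv ξ hquasi t (fun _ => k) (fun _ => hk)
end

section
/- Let Ξ ⊆ ℝ^{1+dT} be convex and let ξ(k,t) ∈ ℝ^d (k = 0,…,K−1, t = 0,…,T−1) satisfy quasi-stationarity. Then for every t ∈ {0,…,T−1} and every k ∈ {1,…,K−1}, the vector (1, ξ̄(0), …, ξ̄(t−1), ξ̃(k,t), ξ(0,t+1), …, ξ(0,T−1)) lies in Ξ, where ξ̄(s) = (1/K)·Σ_{ℓ=0}^{K−1} ξ(ℓ,s) and ξ̃(k,t) = (1/k)·Σ_{ℓ=0}^{k−1} ξ(ℓ,t). -/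
/-- Partial average `ξ̃(k,t) = (1/k)·Σ_{ℓ=0}^{k−1} ξ(ℓ,t)`. -/
noncomputable def partialAvg {ι : Type*} (k : ℕ) (ξ : ℕ → ℕ → ι → ℝ) (t : ℕ) :
    ι → ℝ :=
  (k : ℝ)⁻¹ • ∑ ℓ ∈ Finset.range k, ξ ℓ t

lemma aux_slow (T K : ℕ) {d : ℕ} (hK : 0 < K)
    (Ξ : Set (ℝ × (Fin T → Fin d → ℝ))) (hconv : Convex ℝ Ξ)
    (ξ : ℕ → ℕ → Fin d → ℝ)
    (hquasi : ∀ f : ℕ → ℕ, (∀ t, f t < K) →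
      ((1 : ℝ), fun t : Fin T => ξ (f t) t) ∈ Ξ) :
    ∀ t : ℕ, ∀ f : ℕ → ℕ, (∀ s, f s < K) →
      ((1 : ℝ), fun s : Fin T =>
        if (s : ℕ) < t then ((K : ℝ)⁻¹ • ∑ ℓ ∈ Finset.range K, ξ ℓ s : Fin d → ℝ)
        else ξ (f s) s) ∈ Ξ := by
  intro t
  induction t with
  | zero =>
    intro f hf
    simpa using hquasi f hf
  | succ t ih =>
    intro f hf
    have hKne : (K : ℝ) ≠ 0 := Nat.cast_ne_zero.mpr hK.ne'
    have key : ((1 : ℝ), fun s : Fin T =>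
        if (s : ℕ) < t + 1 then ((K : ℝ)⁻¹ • ∑ ℓ ∈ Finset.range K, ξ ℓ s : Fin d → ℝ)
        else ξ (f s) s)
        = ∑ ℓ ∈ Finset.range K, (K : ℝ)⁻¹ •
          (((1 : ℝ), fun s : Fin T =>
            if (s : ℕ) < t then ((K : ℝ)⁻¹ • ∑ m ∈ Finset.range K, ξ m s : Fin d → ℝ)
            else ξ (if (s : ℕ) = t then ℓ else f s) s) : ℝ × (Fin T → Fin d → ℝ)) := by
      apply Prod.ext
      · simp [Prod.fst_sum, Finset.sum_const, mul_comm, hKne]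
      · simp only [Prod.snd_sum, Prod.smul_snd]
        funext s
        rw [Finset.sum_apply]
        simp only [Pi.smul_apply]
        rcases lt_trichotomy (s : ℕ) t with hst | hst | hst
        · simp only [if_pos (Nat.lt_succ_of_lt hst), if_pos hst]
          rw [Finset.sum_const, ← Nat.cast_smul_eq_nsmul ℝ, smul_smul, smul_smul,
            Finset.card_range, mul_inv_cancel₀ hKne, one_mul]
        · have h1 : ¬ ((s : ℕ) < t) := by omega
          simp only [hst]
          simp [Finset.smul_sum]
        · have h1 : ¬ ((s : ℕ) < t + 1) := by omega
          have h2 : ¬ ((s : ℕ) < t) := by omega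
          have h3 : (s : ℕ) ≠ t := by omega
          simp only [if_neg h1, if_neg h2, if_neg h3]
          rw [← Finset.sum_smul]
          simp [hKne]
    rw [key]
    refine hconv.sum_mem (fun i _ => by positivity) ?_ ?_
    · simp [Finset.sum_const, mul_comm, hKne]
    · intro ℓ hℓ
      have := ih (fun s' => if s' = t then ℓ else f s')
        (fun s => by by_cases h : s = t <;> simp [h, Finset.mem_range.mp hℓ, hf s])
      simpa using this

/-- under quasi-stationarity and convexity of `Ξ`, for every
`t ∈ {0,…,T−1}` and `k ∈ {1,…,K−1}` the vector
`(1, ξ̄(0), …, ξ̄(t−1), ξ̃(k,t), ξ(0,t+1), …, ξ(0,T−1))` lies in `Ξ`. -/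
theorem statement_1 (d T K : ℕ) (hd : 0 < d) (hT : 0 < T) (hK : 0 < K)
    (Ξ : Set (ℝ × (Fin T → Fin d → ℝ))) (hconv : Convex ℝ Ξ)
    (ξ : ℕ → ℕ → Fin d → ℝ)
    (hquasi : ∀ f : ℕ → ℕ, (∀ t, f t < K) →
      ((1 : ℝ), fun t : Fin T => ξ (f t) t) ∈ Ξ)
    (t : ℕ) (ht : t < T) (k : ℕ) (hk1 : 1 ≤ k) (hk2 : k ≤ K - 1) :
    ((1 : ℝ), fun s : Fin T =>
      if (s : ℕ) < t then slowAvg K ξ s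
      else if (s : ℕ) = t then partialAvg k ξ t
      else ξ 0 s) ∈ Ξ := by
  have hkne : (k : ℝ) ≠ 0 := Nat.cast_ne_zero.mpr (by omega)
  have key : ((1 : ℝ), fun s : Fin T =>
      if (s : ℕ) < t then slowAvg K ξ s
      else if (s : ℕ) = t then partialAvg k ξ t
      else ξ 0 s)
      = ∑ ℓ ∈ Finset.range k, (k : ℝ)⁻¹ •
        (((1 : ℝ), fun s : Fin T =>
          if (s : ℕ) < t then ((K : ℝ)⁻¹ • ∑ m ∈ Finset.range K, ξ m s : Fin d → ℝ)
          else ξ (if (s : ℕ) = t then ℓ else 0) s) : ℝ × (Fin T → Fin d → ℝ)) := by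
    apply Prod.ext
    · simp [Prod.fst_sum, Finset.sum_const, mul_comm, hkne]
    · simp only [Prod.snd_sum, Prod.smul_snd]
      funext s
      rw [Finset.sum_apply]
      simp only [Pi.smul_apply]
      rcases lt_trichotomy (s : ℕ) t with hst | hst | hst
      · simp only [if_pos hst, slowAvg]
        rw [Finset.sum_const, ← Nat.cast_smul_eq_nsmul ℝ, smul_smul, smul_smul,
          Finset.card_range, mul_inv_cancel₀ hkne, one_mul]
      · have h1 : ¬ ((s : ℕ) < t) := by omega
        simp only [hst, partialAvg]
        simp [Finset.smul_sum]
      · have h1 : ¬ ((s : ℕ) < t) := by omega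
        have h3 : (s : ℕ) ≠ t := by omega
        simp only [if_neg h1, if_neg h3]
        rw [← Finset.sum_smul]
        simp [hkne]
  rw [key]
  refine hconv.sum_mem (fun i _ => by positivity) ?_ ?_
  · simp [Finset.sum_const, mul_comm, hkne]
  · intro ℓ hℓ
    have hℓK : ℓ < K := by have := Finset.mem_range.mp hℓ; omega
    have := aux_slow T K hK Ξ hconv ξ hquasi t (fun s' => if s' = t then ℓ else 0)
      (fun s => by by_cases h : s = t <;> simp [h, hℓK, hK])
    simpa using this
end

section
/- Let Ξ ⊆ ℝ^{1+dT} be convex and let ξ(k,t) ∈ ℝ^d (k = 0,…,K−1, t = 0,…,T−1) satisfy quasi-stationarity. Then for every collection of probability weights λ_t ∈ ℝ^K (λ_t(k) ≥ 0, Σ_{k=0}^{K−1} λ_t(k) = 1, for each t = 0,…,T−1), the blockwise mixture (1, Σ_k λ_0(k)·ξ(k,0), Σ_k λ_1(k)·ξ(k,1), …, Σ_k λ_{T−1}(k)·ξ(k,T−1)) lies in Ξ. -/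
/-- under quasi-stationarity and convexity of `Ξ`, every blockwise
mixture `(1, Σ_k λ_0(k)·ξ(k,0), …, Σ_k λ_{T−1}(k)·ξ(k,T−1))` with probability
weights `λ_t` lies in `Ξ`. -/
theorem statement_2 (d T K : ℕ) (hd : 0 < d) (hT : 0 < T) (hK : 0 < K)
    (Ξ : Set (ℝ × (Fin T → Fin d → ℝ))) (hconv : Convex ℝ Ξ)
    (ξ : ℕ → ℕ → Fin d → ℝ)
    (hquasi : ∀ f : ℕ → ℕ, (∀ t, f t < K) →
      ((1 : ℝ), fun t : Fin T => ξ (f t) t) ∈ Ξ)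
    (lam : ℕ → ℕ → ℝ)
    (hnn : ∀ t < T, ∀ k < K, 0 ≤ lam t k)
    (hsum : ∀ t < T, ∑ k ∈ Finset.range K, lam t k = 1) :
    ((1 : ℝ), fun t : Fin T =>
      ∑ k ∈ Finset.range K, lam t k • ξ k t) ∈ Ξ := by
  suffices h : ∀ m, m ≤ T → ∀ f : ℕ → ℕ, (∀ t, f t < K) →
      ((1 : ℝ), fun t : Fin T =>
        if (t : ℕ) < m then ∑ k ∈ Finset.range K, lam t k • ξ k t
        else ξ (f t) t) ∈ Ξ by
    have := h T le_rfl (fun _ => 0) (fun _ => hK)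
    simpa [Fin.is_lt] using this
  intro m
  induction m with
  | zero => intro _ f hf; simpa using hquasi f hf
  | succ m ih =>
    intro hm f hf
    have hmT : m < T := hm
    have key := hconv.sum_mem (t := Finset.range K)
      (fun k hk => hnn m hmT k (Finset.mem_range.mp hk)) (hsum m hmT)
      (fun k hk => ih (le_of_lt hmT) (Function.update f m k)
        (fun t => by
          rcases eq_or_ne t m with h | h <;>
            simp [h, Function.update, hf t, Finset.mem_range.mp hk]))
    convert key using 1
    refine Prod.ext ?_ ?_
    · simp [Prod.fst_sum, hsum m hmT]
    · funext t
      simp only [Prod.snd_sum, Finset.sum_apply, Prod.smul_snd, Pi.smul_apply]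
      rcases lt_trichotomy (t : ℕ) m with h | h | h
      · have h' : (t : ℕ) < m + 1 := Nat.lt_succ_of_lt h
        simp only [h, h', if_true]
        rw [← Finset.sum_smul, hsum m hmT, one_smul]
      · have h' : (t : ℕ) < m + 1 := by omega
        have hne : ¬ (t : ℕ) < m := by omega
        simp only [h', if_true, hne, if_false]
        refine Finset.sum_congr rfl fun k hk => ?_
        simp [h, Function.update]
      · have h' : ¬ (t : ℕ) < m + 1 := by omega
        have hne : ¬ (t : ℕ) < m := by omega
        simp only [h', hne, if_false]
        have : ∀ k ∈ Finset.range K,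
            lam m k • ξ (Function.update f m k t) t = lam m k • ξ (f t) t := by
          intro k hk
          have : (t : ℕ) ≠ m := by omega
          simp [Function.update, this]
        rw [Finset.sum_congr rfl this, ← Finset.sum_smul, hsum m hmT, one_smul]
end

section
/- Let Ξ be convex, let the fast time-scale disturbance process satisfy quasi-stationarity, and fix a period t ∈ {0,…,T−1}. Let C ⊆ ℝ^{2n} × ℝ^{3n} be any set such that (u(t;ξ), ξ(t)) ∈ C for every slow time-scale disturbance trajectory ξ = (1, ξ(0), …, ξ(T−1)) ∈ Ξ. Then (u(k,t), ξ(k,t)) ∈ C for every k = 0,…,K−1. -/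
/-- Slow time-scale affine input `u(t;ξ) = ū(t) + Σ_{s=0}^{t} Q(t,s) ξ(s)`,
for the slow time-scale disturbance trajectory `ζ`.  Inputs live in
`ℝ^{2n} ≃ (Fin n × Fin 2 → ℝ)` and disturbance blocks in
`ℝ^{3n} ≃ (Fin n × Fin 3 → ℝ)`. -/
def uslow {n : ℕ} (ubar : ℕ → Fin n × Fin 2 → ℝ)
    (Q : ℕ → ℕ → Matrix (Fin n × Fin 2) (Fin n × Fin 3) ℝ)
    (ζ : ℕ → Fin n × Fin 3 → ℝ) (t : ℕ) : Fin n × Fin 2 → ℝ :=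
  ubar t + ∑ s ∈ Finset.range (t + 1), (Q t s).mulVec (ζ s)

/-- Fast time-scale input
`u(k,t) = ū(t) + Q(t,t) ξ(k,t) + Σ_{s=0}^{t−1} Q(t,s) ξ̄(s)`. -/
noncomputable def ufast {n : ℕ} (K : ℕ) (ubar : ℕ → Fin n × Fin 2 → ℝ)
    (Q : ℕ → ℕ → Matrix (Fin n × Fin 2) (Fin n × Fin 3) ℝ)
    (ξ : ℕ → ℕ → Fin n × Fin 3 → ℝ) (k t : ℕ) : Fin n × Fin 2 → ℝ :=
  ubar t + (Q t t).mulVec (ξ k t)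
    + ∑ s ∈ Finset.range t, (Q t s).mulVec (slowAvg K ξ s)

/-- if `(u(t;ξ), ξ(t)) ∈ C` for every slow time-scale disturbance
trajectory in `Ξ`, then `(u(k,t), ξ(k,t)) ∈ C` for every `k = 0,…,K−1`. -/
theorem statement_3 (n T K : ℕ) (hn : 0 < n) (hT : 0 < T) (hK : 0 < K)
    (Ξ : Set (ℝ × (Fin T → Fin n × Fin 3 → ℝ))) (hconv : Convex ℝ Ξ)
    (ξ : ℕ → ℕ → Fin n × Fin 3 → ℝ)
    (hquasi : ∀ f : ℕ → ℕ, (∀ t, f t < K) →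
      ((1 : ℝ), fun t : Fin T => ξ (f t) t) ∈ Ξ)
    (ubar : ℕ → Fin n × Fin 2 → ℝ)
    (Q : ℕ → ℕ → Matrix (Fin n × Fin 2) (Fin n × Fin 3) ℝ)
    (t : ℕ) (ht : t < T)
    (C : Set ((Fin n × Fin 2 → ℝ) × (Fin n × Fin 3 → ℝ)))
    (hC : ∀ ζ : ℕ → Fin n × Fin 3 → ℝ,
      ((1 : ℝ), fun s : Fin T => ζ s) ∈ Ξ → (uslow ubar Q ζ t, ζ t) ∈ C) :
    ∀ k < K, (ufast K ubar Q ξ k t, ξ k t) ∈ C := by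
  intro k hk
  set ζ : ℕ → Fin n × Fin 3 → ℝ :=
    fun s => if s = t then ξ k t else slowAvg K ξ s with hζ
  have hKne : (K : ℝ) ≠ 0 := Nat.cast_ne_zero.mpr hK.ne'
  have hmem : ((1 : ℝ), fun s : Fin T => ζ s) ∈ Ξ := by
    have hsum := hconv.sum_mem (t := Finset.range K)
      (w := fun _ => (K : ℝ)⁻¹)
      (z := fun ℓ => ((1 : ℝ),
        fun s : Fin T => ξ (if (s : ℕ) = t then k else ℓ) s))
      (fun _ _ => by positivity)
      (by simp [Finset.sum_const, mul_inv_cancel₀ hKne])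
      (fun ℓ hℓ => by
        have := hquasi (fun s => if s = t then k else ℓ)
          (fun s => by
            by_cases h : s = t <;> simp [h, hk, Finset.mem_range.mp hℓ])
        simpa using this)
    convert hsum using 1
    refine Prod.ext ?_ ?_
    · simp [Prod.fst_sum, Finset.sum_const, mul_inv_cancel₀ hKne]
    · funext s
      by_cases h : (s : ℕ) = t
      · simp only [Prod.snd_sum, hζ, h]
        simp only [Finset.sum_apply, Prod.smul_snd, Pi.smul_apply]
        rw [if_pos trivial,
          Finset.sum_congr rfl (fun x _ => by rw [if_pos h] :
            ∀ x ∈ Finset.range K, (K : ℝ)⁻¹ • ξ (if (s : ℕ) = t then k else x) ↑s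
              = (K : ℝ)⁻¹ • ξ k ↑s),
          Finset.sum_const, ← Nat.cast_smul_eq_nsmul ℝ, smul_smul,
          Finset.card_range, mul_inv_cancel₀ hKne, one_smul, h]
      · simp only [Prod.snd_sum, hζ, h, if_false, slowAvg]
        simp only [Finset.sum_apply, Prod.smul_snd, Pi.smul_apply]
        rw [Finset.smul_sum]
        exact Finset.sum_congr rfl fun x _ => by rw [if_neg h]
  have heq : ufast K ubar Q ξ k t = uslow ubar Q ζ t := by
    unfold ufast uslow
    rw [Finset.sum_range_succ]
    have h1 : ζ t = ξ k t := by simp [hζ]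
    have h2 : ∀ s ∈ Finset.range t, (Q t s).mulVec (ζ s)
        = (Q t s).mulVec (slowAvg K ξ s) := by
      intro s hs
      have : s ≠ t := (Finset.mem_range.mp hs).ne
      simp [hζ, this]
    rw [h1, Finset.sum_congr rfl h2]
    abel
  have hζt : ζ t = ξ k t := by simp [hζ]
  rw [heq, ← hζt]
  exact hC ζ hmem
end

section
/- Under the fast time-scale controller, the fast time-scale state at the beginning of every slow time-scale period equals the slow time-scale state generated by the affine policy driven by the period-averaged disturbance trajectory: for every t = 0,…,T−1, x(0,t) = x(0) + B·Σ_{s=0}^{t−1} ( ū(s) + Σ_{r=0}^{s} Q(s,r) ξ̄(r) ), and moreover x(K,T−1) = x(0) + B·Σ_{s=0}^{T−1} ( ū(s) + Σ_{r=0}^{s} Q(s,r) ξ̄(r) ). -/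
open Finset Matrix

theorem eq_add_sum_range_of_succ_eq_add {E : Type*} [AddCommMonoid E] {x v : ℕ → E} {N : ℕ}
    (h : ∀ k < N, x (k + 1) = x k + v k) : x N = x 0 + ∑ k ∈ range N, v k := by
  induction N with
  | zero => simp
  | succ N ih =>
    rw [h N N.lt_succ_self, ih fun k hk => h k (hk.trans N.lt_succ_self), sum_range_succ,
      add_assoc]

section Averaging

variable {ι : Type*} {K : ℕ}

theorem slowAvg_add (ξ ζ : ℕ → ℕ → ι → ℝ) (t : ℕ) :
    slowAvg K (ξ + ζ) t = slowAvg K ξ t + slowAvg K ζ t := by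
  simp only [slowAvg, Pi.add_apply, sum_add_distrib, smul_add]

theorem slowAvg_const (hK : K ≠ 0) (v : ℕ → ι → ℝ) (t : ℕ) :
    slowAvg K (fun _ s => v s) t = v t := by
  rw [slowAvg, sum_const, card_range, ← Nat.cast_smul_eq_nsmul ℝ, smul_smul,
    inv_mul_cancel₀ (Nat.cast_ne_zero.mpr hK), one_smul]

theorem slowAvg_mulVec {κ : Type*} [Fintype ι] (A : ℕ → Matrix κ ι ℝ) (ξ : ℕ → ℕ → ι → ℝ)
    (t : ℕ) : slowAvg K (fun k s => A s *ᵥ ξ k s) t = A t *ᵥ slowAvg K ξ t := by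
  rw [slowAvg, slowAvg, mulVec_smul, mulVec_sum]

end Averaging

theorem slowAvg_ufast {n K : ℕ} (hK : K ≠ 0) (ubar : ℕ → Fin n × Fin 2 → ℝ)
    (Q : ℕ → ℕ → Matrix (Fin n × Fin 2) (Fin n × Fin 3) ℝ) (ξ : ℕ → ℕ → Fin n × Fin 3 → ℝ)
    (t : ℕ) :
    slowAvg K (ufast K ubar Q ξ) t =
      ubar t + ∑ r ∈ range (t + 1), Q t r *ᵥ slowAvg K ξ r := by
  have hsplit : ufast K ubar Q ξ = (fun _ s => ubar s) + (fun k s => Q s s *ᵥ ξ k s)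
      + fun _ s => ∑ r ∈ range s, Q s r *ᵥ slowAvg K ξ r := rfl
  rw [hsplit, slowAvg_add, slowAvg_add, slowAvg_const hK, slowAvg_mulVec,
    slowAvg_const hK, sum_range_succ]
  abel

theorem fastState_period_eq {n K : ℕ} (hK : K ≠ 0) (ubar : ℕ → Fin n × Fin 2 → ℝ)
    (Q : ℕ → ℕ → Matrix (Fin n × Fin 2) (Fin n × Fin 3) ℝ) (ξ : ℕ → ℕ → Fin n × Fin 3 → ℝ)
    (B : Matrix (Fin n) (Fin n × Fin 2) ℝ) (x : ℕ → Fin n → ℝ) (t : ℕ)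
    (hstep : ∀ k < K, x (k + 1) = x k + (K : ℝ)⁻¹ • B *ᵥ ufast K ubar Q ξ k t) :
    x K = x 0 + B *ᵥ (ubar t + ∑ r ∈ range (t + 1), Q t r *ᵥ slowAvg K ξ r) := by
  rw [eq_add_sum_range_of_succ_eq_add hstep, ← slowAvg_ufast hK, slowAvg, mulVec_smul,
    mulVec_sum, smul_sum]

theorem statement_4_general (n T K : ℕ) (hT : 0 < T) (hK : 0 < K)
    (ξ : ℕ → ℕ → Fin n × Fin 3 → ℝ)
    (ubar : ℕ → Fin n × Fin 2 → ℝ)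
    (Q : ℕ → ℕ → Matrix (Fin n × Fin 2) (Fin n × Fin 3) ℝ)
    (B : Matrix (Fin n) (Fin n × Fin 2) ℝ) (x0 : Fin n → ℝ)
    (xf : ℕ → ℕ → Fin n → ℝ)
    (hx00 : xf 0 0 = x0)
    (hstep : ∀ t < T, ∀ k < K,
      xf (k + 1) t = xf k t + (K : ℝ)⁻¹ • B.mulVec (ufast K ubar Q ξ k t))
    (hbdry : ∀ t, t + 1 < T → xf 0 (t + 1) = xf K t) :
    (∀ t < T, xf 0 t = x0 + B.mulVec (∑ s ∈ Finset.range t,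
      (ubar s + ∑ r ∈ Finset.range (s + 1), (Q s r).mulVec (slowAvg K ξ r))))
    ∧ xf K (T - 1) = x0 + B.mulVec (∑ s ∈ Finset.range T,
      (ubar s + ∑ r ∈ Finset.range (s + 1), (Q s r).mulVec (slowAvg K ξ r))) := by
  have hperiod : ∀ t < T, xf K t = xf 0 t + B *ᵥ (ubar t
      + ∑ r ∈ range (t + 1), Q t r *ᵥ slowAvg K ξ r) := fun t ht =>
    fastState_period_eq hK.ne' ubar Q ξ B (xf · t) t (hstep t ht)
  have hstart : ∀ t < T, xf 0 t = x0 + B *ᵥ ∑ s ∈ range t,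
      (ubar s + ∑ r ∈ range (s + 1), Q s r *ᵥ slowAvg K ξ r) := by
    intro t ht
    rw [mulVec_sum, ← hx00]
    exact eq_add_sum_range_of_succ_eq_add fun s hs =>
      (hbdry s (by omega)).trans (hperiod s (hs.trans ht))
  refine ⟨hstart, ?_⟩
  obtain ⟨T, rfl⟩ := Nat.exists_eq_add_one_of_ne_zero hT.ne'
  rw [Nat.add_sub_cancel, hperiod T T.lt_succ_self, hstart T T.lt_succ_self, add_assoc,
    ← mulVec_add, ← sum_range_succ]

/-- under the fast time-scale controller, the fast time-scale
state at the beginning of every slow time-scale period equals the slow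
time-scale state generated by the affine policy driven by the period-averaged
disturbance trajectory:
`x(0,t) = x(0) + B·Σ_{s<t} (ū(s) + Σ_{r≤s} Q(s,r) ξ̄(r))` for `t = 0,…,T−1`,
and `x(K,T−1) = x(0) + B·Σ_{s<T} (ū(s) + Σ_{r≤s} Q(s,r) ξ̄(r))`. -/
theorem statement_4 (n T K : ℕ) (hn : 0 < n) (hT : 0 < T) (hK : 0 < K)
    (ξ : ℕ → ℕ → Fin n × Fin 3 → ℝ)
    (ubar : ℕ → Fin n × Fin 2 → ℝ)
    (Q : ℕ → ℕ → Matrix (Fin n × Fin 2) (Fin n × Fin 3) ℝ)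
    (B : Matrix (Fin n) (Fin n × Fin 2) ℝ) (x0 : Fin n → ℝ)
    (xf : ℕ → ℕ → Fin n → ℝ)
    (hx00 : xf 0 0 = x0)
    (hstep : ∀ t < T, ∀ k < K,
      xf (k + 1) t = xf k t + (K : ℝ)⁻¹ • B.mulVec (ufast K ubar Q ξ k t))
    (hbdry : ∀ t, t + 1 < T → xf 0 (t + 1) = xf K t) :
    (∀ t < T, xf 0 t = x0 + B.mulVec (∑ s ∈ Finset.range t,
      (ubar s + ∑ r ∈ Finset.range (s + 1), (Q s r).mulVec (slowAvg K ξ r))))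
    ∧ xf K (T - 1) = x0 + B.mulVec (∑ s ∈ Finset.range T,
      (ubar s + ∑ r ∈ Finset.range (s + 1), (Q s r).mulVec (slowAvg K ξ r))) :=
  statement_4_general n T K hT hK ξ ubar Q B x0 xf hx00 hstep hbdry
end

section
/- (Proposition 3, Part 2: fast time-scale state feasibility.) Let Ξ be convex, let the fast time-scale disturbance process satisfy quasi-stationarity, and let b ∈ ℝ^n. Suppose the affine policy is feasible for the slow time-scale state constraints: for every ξ = (1, ξ(0), …, ξ(T−1)) ∈ Ξ and every t = 0,…,T, 0 ≤ x(t;ξ) ≤ b componentwise. Then the fast time-scale states satisfy 0 ≤ x(k,t) ≤ b componentwise for every t = 0,…,T−1 and every k = 0,…,K. -/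
/-- Slow time-scale state `x(t;ξ) = x(0) + B·Σ_{s=0}^{t−1} u(s;ξ)`. -/
def xslow {n : ℕ} (B : Matrix (Fin n) (Fin n × Fin 2) ℝ) (x0 : Fin n → ℝ)
    (ubar : ℕ → Fin n × Fin 2 → ℝ)
    (Q : ℕ → ℕ → Matrix (Fin n × Fin 2) (Fin n × Fin 3) ℝ)
    (ζ : ℕ → Fin n × Fin 3 → ℝ) (t : ℕ) : Fin n → ℝ :=
  x0 + B.mulVec (∑ s ∈ Finset.range t, uslow ubar Q ζ s)

/-! Fix a period `t`. For `ℓ < K` let `ζₜℓ` be the slow trajectory that follows the averages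
`ξ̄(s)` before `t` and the fast disturbance `ξ(ℓ, s)` from `t` on. Both `ξ̄` and every `ζₜℓ` are
averages of quasi-stationary selections `s ↦ ξ(f(s), s)`, hence lie in the convex set `Ξ`.
Unrolling the fast dynamics, `x(0,t) = x(t; ξ̄)` and
`x(k,t) = x(t; ξ̄) + (1/K) Σ_{ℓ<k} (x(t+1; ζₜℓ) - x(t; ξ̄))`,
so `x(k,t)` is a convex combination of slow states, all of which lie in the convex box `[0, b]`. -/

open Finset Matrix

section Averages

variable {E : Type*} [AddCommGroup E] [Module ℝ E] {s : Set E} {K : ℕ}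

theorem Convex.inv_smul_sum_range_mem (hs : Convex ℝ s) (hK : 0 < K) {z : ℕ → E}
    (hz : ∀ ℓ < K, z ℓ ∈ s) : (K : ℝ)⁻¹ • ∑ ℓ ∈ range K, z ℓ ∈ s := by
  rw [smul_sum]
  exact hs.sum_mem (fun _ _ => by positivity) (by simp [hK.ne'])
    fun ℓ hℓ => hz ℓ (mem_range.mp hℓ)

theorem Convex.add_inv_smul_sum_range_mem (hs : Convex ℝ s) (hK : 0 < K) {k : ℕ} (hk : k ≤ K)
    {x : E} {v : ℕ → E} (hx : x ∈ s) (hv : ∀ ℓ < k, x + v ℓ ∈ s) :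
    x + (K : ℝ)⁻¹ • ∑ ℓ ∈ range k, v ℓ ∈ s := by
  have hfilter : (range K).filter (· < k) = range k := by
    ext ℓ; simp only [mem_filter, mem_range]; omega
  have hcomb : x + (K : ℝ)⁻¹ • ∑ ℓ ∈ range k, v ℓ
      = (K : ℝ)⁻¹ • ∑ ℓ ∈ range K, (x + if ℓ < k then v ℓ else 0) := by
    rw [sum_add_distrib, ← sum_filter, hfilter, sum_const, card_range, smul_add,
      ← Nat.cast_smul_eq_nsmul ℝ, smul_smul, inv_mul_cancel₀ (by positivity), one_smul]
  rw [hcomb]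
  refine hs.inv_smul_sum_range_mem hK fun ℓ _ => ?_
  split_ifs with hℓ
  · exact hv ℓ hℓ
  · simpa using hx

theorem eq_add_smul_sum_range_of_step {x v : ℕ → E} {c : ℝ}
    (hstep : ∀ k < K, x (k + 1) = x k + c • v k) :
    ∀ k ≤ K, x k = x 0 + c • ∑ ℓ ∈ range k, v ℓ := by
  intro k hk
  induction k with
  | zero => simp
  | succ k ih => rw [hstep k hk, ih (by omega), sum_range_succ, smul_add, add_assoc]

end Averages

section QuasiStationarity

variable {ι : Type*} {T K : ℕ} {Ξ : Set (ℝ × (Fin T → ι → ℝ))} {ξ : ℕ → ℕ → ι → ℝ}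

def QuasiStationary (K : ℕ) (Ξ : Set (ℝ × (Fin T → ι → ℝ))) (ξ : ℕ → ℕ → ι → ℝ) : Prop :=
  ∀ f : ℕ → ℕ, (∀ t, f t < K) → ((1 : ℝ), fun t : Fin T => ξ (f t) t) ∈ Ξ

theorem avg_of_selections_mem (hK : 0 < K) (hconv : Convex ℝ Ξ)
    (hquasi : QuasiStationary K Ξ ξ)
    (g : ℕ → ℕ → ℕ) (hg : ∀ m < K, ∀ s, g m s < K) :
    ((1 : ℝ), fun s : Fin T => (K : ℝ)⁻¹ • ∑ m ∈ range K, ξ (g m s) s) ∈ Ξ := by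
  convert hconv.inv_smul_sum_range_mem hK fun m hm => hquasi (g m) (hg m hm) using 1
  ext s
  · simp [Prod.fst_sum, hK.ne']
  · simp [Prod.snd_sum, Finset.sum_apply]

theorem slowAvg_mem (hK : 0 < K) (hconv : Convex ℝ Ξ)
    (hquasi : QuasiStationary K Ξ ξ) :
    ((1 : ℝ), fun s : Fin T => slowAvg K ξ s) ∈ Ξ :=
  avg_of_selections_mem hK hconv hquasi (fun m _ => m) fun _ hm _ => hm

noncomputable def slowAvgThen (K : ℕ) (ξ : ℕ → ℕ → ι → ℝ) (t ℓ : ℕ) : ℕ → ι → ℝ :=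
  fun s => if s < t then slowAvg K ξ s else ξ ℓ s

theorem slowAvgThen_mem (hK : 0 < K) (hconv : Convex ℝ Ξ)
    (hquasi : QuasiStationary K Ξ ξ)
    (t : ℕ) {ℓ : ℕ} (hℓ : ℓ < K) :
    ((1 : ℝ), fun s : Fin T => slowAvgThen K ξ t ℓ s) ∈ Ξ := by
  convert avg_of_selections_mem hK hconv hquasi (fun m s => if s < t then m else ℓ)
    (fun m hm s => by split_ifs <;> assumption) using 3 with s
  have hK0 : (K : ℝ) ≠ 0 := Nat.cast_ne_zero.mpr hK.ne'
  by_cases hs : (s : ℕ) < t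
  · simp [slowAvgThen, hs, slowAvg]
  · simp only [slowAvgThen, hs, if_false, sum_const, card_range, ← Nat.cast_smul_eq_nsmul ℝ,
      smul_smul, inv_mul_cancel₀ hK0, one_smul]

end QuasiStationarity

section Dynamics

variable {n K : ℕ} (B : Matrix (Fin n) (Fin n × Fin 2) ℝ) (x0 : Fin n → ℝ)
  (ubar : ℕ → Fin n × Fin 2 → ℝ) (Q : ℕ → ℕ → Matrix (Fin n × Fin 2) (Fin n × Fin 3) ℝ)
  (ξ : ℕ → ℕ → Fin n × Fin 3 → ℝ)

theorem xslow_zero (ζ : ℕ → Fin n × Fin 3 → ℝ) : xslow B x0 ubar Q ζ 0 = x0 := by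
  simp [xslow]

theorem xslow_succ (ζ : ℕ → Fin n × Fin 3 → ℝ) (t : ℕ) :
    xslow B x0 ubar Q ζ (t + 1) = xslow B x0 ubar Q ζ t + B *ᵥ uslow ubar Q ζ t := by
  simp only [xslow, sum_range_succ, mulVec_add, add_assoc]

theorem uslow_congr {ζ ζ' : ℕ → Fin n × Fin 3 → ℝ} {t : ℕ} (h : ∀ s ≤ t, ζ s = ζ' s) :
    uslow ubar Q ζ t = uslow ubar Q ζ' t := by
  unfold uslow
  congr 1
  exact sum_congr rfl fun s hs => by rw [h s (Nat.lt_succ_iff.mp (mem_range.mp hs))]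

theorem xslow_congr {ζ ζ' : ℕ → Fin n × Fin 3 → ℝ} {t : ℕ} (h : ∀ s < t, ζ s = ζ' s) :
    xslow B x0 ubar Q ζ t = xslow B x0 ubar Q ζ' t := by
  unfold xslow
  congr 2
  exact sum_congr rfl fun s hs =>
    uslow_congr ubar Q fun r hr => h r (hr.trans_lt (mem_range.mp hs))

theorem uslow_slowAvgThen_self (t ℓ : ℕ) :
    uslow ubar Q (slowAvgThen K ξ t ℓ) t = ufast K ubar Q ξ ℓ t := by
  rw [uslow, ufast, sum_range_succ, add_assoc, add_comm (∑ s ∈ range t, _)]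
  congr 2
  · simp [slowAvgThen]
  · exact sum_congr rfl fun s hs => by simp [slowAvgThen, mem_range.mp hs]

theorem xslow_slowAvgThen_succ (t ℓ : ℕ) :
    xslow B x0 ubar Q (slowAvgThen K ξ t ℓ) (t + 1)
      = xslow B x0 ubar Q (slowAvg K ξ) t + B *ᵥ ufast K ubar Q ξ ℓ t := by
  rw [xslow_succ, uslow_slowAvgThen_self,
    xslow_congr B x0 ubar Q (ζ' := slowAvg K ξ) fun s hs => by simp [slowAvgThen, hs]]

theorem inv_smul_sum_ufast (hK : 0 < K) (t : ℕ) :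
    (K : ℝ)⁻¹ • ∑ ℓ ∈ range K, ufast K ubar Q ξ ℓ t = uslow ubar Q (slowAvg K ξ) t := by
  have hK0 : (K : ℝ) ≠ 0 := Nat.cast_ne_zero.mpr hK.ne'
  simp only [ufast, uslow, sum_add_distrib, sum_const, card_range, sum_range_succ,
    ← mulVec_sum, smul_add, ← Nat.cast_smul_eq_nsmul ℝ, smul_smul, inv_mul_cancel₀ hK0,
    one_smul, ← mulVec_smul, slowAvg]
  abel

theorem fast_state_eq_xslow_slowAvg_add {T : ℕ} (hK : 0 < K) {xf : ℕ → ℕ → Fin n → ℝ}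
    (hx00 : xf 0 0 = x0)
    (hstep : ∀ t < T, ∀ k < K,
      xf (k + 1) t = xf k t + (K : ℝ)⁻¹ • B.mulVec (ufast K ubar Q ξ k t))
    (hbdry : ∀ t, t + 1 < T → xf 0 (t + 1) = xf K t) :
    ∀ t < T, ∀ k ≤ K, xf k t = xslow B x0 ubar Q (slowAvg K ξ) t
      + (K : ℝ)⁻¹ • ∑ ℓ ∈ range k, B *ᵥ ufast K ubar Q ξ ℓ t := by
  have hperiod : ∀ t < T, ∀ k ≤ K,
      xf k t = xf 0 t + (K : ℝ)⁻¹ • ∑ ℓ ∈ range k, B *ᵥ ufast K ubar Q ξ ℓ t :=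
    fun t ht => eq_add_smul_sum_range_of_step (hstep t ht)
  have hstart : ∀ t < T, xf 0 t = xslow B x0 ubar Q (slowAvg K ξ) t := by
    intro t ht
    induction t with
    | zero => rw [hx00, xslow_zero]
    | succ t ih =>
      rw [hbdry t ht, hperiod t (by omega) K le_rfl, ih (by omega), ← mulVec_sum,
        ← mulVec_smul, inv_smul_sum_ufast ubar Q ξ hK, xslow_succ]
  intro t ht k hk
  rw [hperiod t ht k hk, hstart t ht]

end Dynamics

theorem statement_5_general (n T K : ℕ) (hK : 0 < K)
    (Ξ : Set (ℝ × (Fin T → Fin n × Fin 3 → ℝ))) (hconv : Convex ℝ Ξ)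
    (ξ : ℕ → ℕ → Fin n × Fin 3 → ℝ)
    (hquasi : ∀ f : ℕ → ℕ, (∀ t, f t < K) →
      ((1 : ℝ), fun t : Fin T => ξ (f t) t) ∈ Ξ)
    (ubar : ℕ → Fin n × Fin 2 → ℝ)
    (Q : ℕ → ℕ → Matrix (Fin n × Fin 2) (Fin n × Fin 3) ℝ)
    (B : Matrix (Fin n) (Fin n × Fin 2) ℝ) (x0 : Fin n → ℝ) (b : Fin n → ℝ)
    (xf : ℕ → ℕ → Fin n → ℝ)
    (hx00 : xf 0 0 = x0)
    (hstep : ∀ t < T, ∀ k < K,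
      xf (k + 1) t = xf k t + (K : ℝ)⁻¹ • B.mulVec (ufast K ubar Q ξ k t))
    (hbdry : ∀ t, t + 1 < T → xf 0 (t + 1) = xf K t)
    (hslow : ∀ ζ : ℕ → Fin n × Fin 3 → ℝ,
      ((1 : ℝ), fun s : Fin T => ζ s) ∈ Ξ → ∀ t ≤ T, ∀ i,
        0 ≤ xslow B x0 ubar Q ζ t i ∧ xslow B x0 ubar Q ζ t i ≤ b i) :
    ∀ t < T, ∀ k ≤ K, ∀ i, 0 ≤ xf k t i ∧ xf k t i ≤ b i := by
  have hbox : ∀ ζ : ℕ → Fin n × Fin 3 → ℝ, ((1 : ℝ), fun s : Fin T => ζ s) ∈ Ξ →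
      ∀ t ≤ T, xslow B x0 ubar Q ζ t ∈ Set.Icc 0 b :=
    fun ζ hζ t ht => ⟨fun i => (hslow ζ hζ t ht i).1, fun i => (hslow ζ hζ t ht i).2⟩
  intro t ht k hk i
  have hmem : xf k t ∈ Set.Icc 0 b := by
    rw [fast_state_eq_xslow_slowAvg_add B x0 ubar Q ξ hK hx00 hstep hbdry t ht k hk]
    refine (convex_Icc 0 b).add_inv_smul_sum_range_mem hK hk
      (hbox _ (slowAvg_mem hK hconv hquasi) t ht.le) fun ℓ hℓ => ?_
    rw [← xslow_slowAvgThen_succ]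
    exact hbox _ (slowAvgThen_mem hK hconv hquasi t (hℓ.trans_le hk)) (t + 1) ht
  exact ⟨hmem.1 i, hmem.2 i⟩

/-- Proposition 3, Part 2: fast time-scale state feasibility:
if the affine policy robustly satisfies `0 ≤ x(t;ξ) ≤ b` for all slow
time-scale trajectories in `Ξ` and `t = 0,…,T`, then the fast time-scale
states satisfy `0 ≤ x(k,t) ≤ b` for all `t = 0,…,T−1` and `k = 0,…,K`. -/
theorem statement_5 (n T K : ℕ) (hn : 0 < n) (hT : 0 < T) (hK : 0 < K)
    (Ξ : Set (ℝ × (Fin T → Fin n × Fin 3 → ℝ))) (hconv : Convex ℝ Ξ)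
    (ξ : ℕ → ℕ → Fin n × Fin 3 → ℝ)
    (hquasi : ∀ f : ℕ → ℕ, (∀ t, f t < K) →
      ((1 : ℝ), fun t : Fin T => ξ (f t) t) ∈ Ξ)
    (ubar : ℕ → Fin n × Fin 2 → ℝ)
    (Q : ℕ → ℕ → Matrix (Fin n × Fin 2) (Fin n × Fin 3) ℝ)
    (B : Matrix (Fin n) (Fin n × Fin 2) ℝ) (x0 : Fin n → ℝ) (b : Fin n → ℝ)
    (xf : ℕ → ℕ → Fin n → ℝ)
    (hx00 : xf 0 0 = x0)
    (hstep : ∀ t < T, ∀ k < K,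
      xf (k + 1) t = xf k t + (K : ℝ)⁻¹ • B.mulVec (ufast K ubar Q ξ k t))
    (hbdry : ∀ t, t + 1 < T → xf 0 (t + 1) = xf K t)
    (hslow : ∀ ζ : ℕ → Fin n × Fin 3 → ℝ,
      ((1 : ℝ), fun s : Fin T => ζ s) ∈ Ξ → ∀ t ≤ T, ∀ i,
        0 ≤ xslow B x0 ubar Q ζ t i ∧ xslow B x0 ubar Q ζ t i ≤ b i) :
    ∀ t < T, ∀ k ≤ K, ∀ i, 0 ≤ xf k t i ∧ xf k t i ≤ b i :=
  statement_5_general n T K hK Ξ hconv ξ hquasi ubar Q B x0 b xf hx00 hstep hbdry hslow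
end

section
/- (Fast time-scale voltage feasibility.) Let Ξ be convex, let the fast time-scale disturbance process satisfy quasi-stationarity, and let v̲², v̄² ∈ ℝ^n. Suppose that for every ξ = (1, ξ(0), …, ξ(T−1)) ∈ Ξ and every t = 0,…,T−1, v̲² ≤ V_u·u(t;ξ) + V_ξ·ξ(t) + v₀²·𝟏 ≤ v̄² componentwise. Then for every t = 0,…,T−1 and every k = 0,…,K−1, v̲² ≤ V_u·u(k,t) + V_ξ·ξ(k,t) + v₀²·𝟏 ≤ v̄² componentwise. -/
/-- `V_u = R ⊗ [1, 0] + X ⊗ [0, 1] ∈ ℝ^{n×2n}` (Kronecker product written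
entrywise over the index identification `ℝ^{2n} ≃ (Fin n × Fin 2 → ℝ)`). -/
def Vu (n : ℕ) (R X : Matrix (Fin n) (Fin n) ℝ) :
    Matrix (Fin n) (Fin n × Fin 2) ℝ :=
  Matrix.of fun i p => R i p.1 * ![(1 : ℝ), 0] p.2 + X i p.1 * ![(0 : ℝ), 1] p.2

/-- `V_ξ = R ⊗ [−1, 0, 1] − X ⊗ [0, 1, 0] ∈ ℝ^{n×3n}` (Kronecker product
written entrywise over `ℝ^{3n} ≃ (Fin n × Fin 3 → ℝ)`). -/
def Vxi (n : ℕ) (R X : Matrix (Fin n) (Fin n) ℝ) :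
    Matrix (Fin n) (Fin n × Fin 3) ℝ :=
  Matrix.of fun i p =>
    R i p.1 * ![(-1 : ℝ), 0, 1] p.2 - X i p.1 * ![(0 : ℝ), 1, 0] p.2

/-!
Fix the slot `t` and the sample `k`. For each choice `f` of fast samples at the past slots
`s < t`, the trajectory reading `ξ(f s, s)` there and `ξ(k, ·)` from slot `t` on lies in `Ξ` by
quasi-stationarity. Each past slot takes every sample equally often over the `K ^ t` choices,
so their uniform average is the trajectory with `ξ̄(s)` at the past slots and `ξ(k, ·)` from
slot `t` on, which lies in `Ξ` by convexity. Along it the slow input at slot `t` is exactly the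
fast input `u(k, t)`, so the slow voltage constraint at `t` is the fast one.
-/

open Finset

lemma Fintype.sum_inv_card_pow_smul_apply {ι κ E : Type*} [Fintype ι] [DecidableEq ι]
    [Fintype κ] [Nonempty κ] [AddCommGroup E] [Module ℝ E] (g : κ → E) (i : ι) :
    ∑ f : ι → κ, ((Fintype.card κ : ℝ) ^ Fintype.card ι)⁻¹ • g (f i)
      = (Fintype.card κ : ℝ)⁻¹ • ∑ b, g b := by
  have hκ : (Fintype.card κ : ℝ) ≠ 0 := Nat.cast_ne_zero.mpr Fintype.card_ne_zero
  obtain ⟨m, hm⟩ := Nat.exists_eq_add_of_lt (Fintype.card_pos_iff.mpr ⟨i⟩)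
  rw [← smul_sum, ← Fintype.piFinset_univ, Fintype.sum_piFinset_apply, card_univ,
    ← Nat.cast_smul_eq_nsmul ℝ, smul_smul, hm]
  congr 1
  push_cast
  field_simp
  ring

section Averaging

variable {ι : Type*} (K : ℕ) (ξ : ℕ → ℕ → ι → ℝ) (t k : ℕ)

def sampledPath (f : Fin t → Fin K) : ℕ → ι → ℝ :=
  fun s => ξ (if h : s < t then f ⟨s, h⟩ else k) s

noncomputable def averagedPath : ℕ → ι → ℝ :=
  fun s => if s < t then slowAvg K ξ s else ξ k s

variable {K ξ t k}

lemma averagedPath_eq_sum (hk : k < K) :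
    averagedPath K ξ t k
      = ∑ f : Fin t → Fin K, ((K : ℝ) ^ t)⁻¹ • sampledPath K ξ t k f := by
  have : Nonempty (Fin K) := ⟨⟨k, hk⟩⟩
  ext s : 1
  simp only [averagedPath, sampledPath, Finset.sum_apply, Pi.smul_apply]
  split_ifs with hs
  · have := Fintype.sum_inv_card_pow_smul_apply (fun ℓ : Fin K => ξ ℓ s) (⟨s, hs⟩ : Fin t)
    simp only [Fintype.card_fin] at this
    rw [this, Fin.sum_univ_eq_sum_range (fun ℓ => ξ ℓ s), slowAvg]
  · rw [← smul_sum, sum_const, card_univ, Fintype.card_fun, Fintype.card_fin, Fintype.card_fin,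
      ← Nat.cast_smul_eq_nsmul ℝ, smul_smul, Nat.cast_pow, inv_mul_cancel₀, one_smul]
    exact pow_ne_zero _ (Nat.cast_ne_zero.mpr (Nat.zero_lt_of_lt hk).ne')

lemma averagedPath_self : averagedPath K ξ t k t = ξ k t := by
  simp [averagedPath]

lemma averagedPath_mem {T : ℕ} {Ξ : Set (ℝ × (Fin T → ι → ℝ))} (hconv : Convex ℝ Ξ)
    (hquasi : ∀ f : ℕ → ℕ, (∀ t, f t < K) → ((1 : ℝ), fun t : Fin T => ξ (f t) t) ∈ Ξ)
    (hk : k < K) :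
    ((1 : ℝ), fun s : Fin T => averagedPath K ξ t k s) ∈ Ξ := by
  have hK : (K : ℝ) ^ t ≠ 0 := pow_ne_zero _ (Nat.cast_ne_zero.mpr (Nat.zero_lt_of_lt hk).ne')
  have hsample (f : Fin t → Fin K) :
      ((1 : ℝ), fun s : Fin T => sampledPath K ξ t k f s) ∈ Ξ := by
    refine hquasi (fun s => if h : s < t then f ⟨s, h⟩ else k) fun s => ?_
    split_ifs
    exacts [(f _).isLt, hk]
  have hweights : ∑ _f : Fin t → Fin K, ((K : ℝ) ^ t)⁻¹ = 1 := by
    simp [hK]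
  convert hconv.sum_mem (fun _ _ => by positivity) hweights fun f _ => hsample f using 1
  ext1
  · simp only [Prod.smul_mk, Prod.fst_sum, smul_eq_mul, mul_one, hweights]
  · ext1 s
    simp only [Prod.smul_mk, Prod.snd_sum, averagedPath_eq_sum hk, Finset.sum_apply,
      Pi.smul_apply]

variable {n : ℕ} (ubar : ℕ → Fin n × Fin 2 → ℝ)
  (Q : ℕ → ℕ → Matrix (Fin n × Fin 2) (Fin n × Fin 3) ℝ)

lemma uslow_averagedPath (ξ : ℕ → ℕ → Fin n × Fin 3 → ℝ) :
    uslow ubar Q (averagedPath K ξ t k) t = ufast K ubar Q ξ k t := by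
  have hpast : ∀ s ∈ range t, (Q t s).mulVec (averagedPath K ξ t k s)
      = (Q t s).mulVec (slowAvg K ξ s) := fun s hs => by
    rw [averagedPath, if_pos (mem_range.mp hs)]
  rw [uslow, ufast, sum_range_succ, sum_congr rfl hpast, averagedPath_self]
  abel

end Averaging

theorem statement_6_general (n T K : ℕ)
    (Ξ : Set (ℝ × (Fin T → Fin n × Fin 3 → ℝ))) (hconv : Convex ℝ Ξ)
    (ξ : ℕ → ℕ → Fin n × Fin 3 → ℝ)
    (hquasi : ∀ f : ℕ → ℕ, (∀ t, f t < K) →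
      ((1 : ℝ), fun t : Fin T => ξ (f t) t) ∈ Ξ)
    (ubar : ℕ → Fin n × Fin 2 → ℝ)
    (Q : ℕ → ℕ → Matrix (Fin n × Fin 2) (Fin n × Fin 3) ℝ)
    (R X : Matrix (Fin n) (Fin n) ℝ) (v0 : ℝ)
    (vlo2 vhi2 : Fin n → ℝ)
    (hslow : ∀ ζ : ℕ → Fin n × Fin 3 → ℝ,
      ((1 : ℝ), fun s : Fin T => ζ s) ∈ Ξ → ∀ t < T, ∀ i,
        vlo2 i ≤ (Vu n R X).mulVec (uslow ubar Q ζ t) i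
            + (Vxi n R X).mulVec (ζ t) i + v0 ^ 2 ∧
        (Vu n R X).mulVec (uslow ubar Q ζ t) i
            + (Vxi n R X).mulVec (ζ t) i + v0 ^ 2 ≤ vhi2 i) :
    ∀ t < T, ∀ k < K, ∀ i,
      vlo2 i ≤ (Vu n R X).mulVec (ufast K ubar Q ξ k t) i
          + (Vxi n R X).mulVec (ξ k t) i + v0 ^ 2 ∧
      (Vu n R X).mulVec (ufast K ubar Q ξ k t) i
          + (Vxi n R X).mulVec (ξ k t) i + v0 ^ 2 ≤ vhi2 i := by
  intro t ht k hk i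
  simpa only [uslow_averagedPath, averagedPath_self] using
    hslow _ (averagedPath_mem (t := t) hconv hquasi hk) t ht i

/-- fast time-scale voltage feasibility: if the affine policy
robustly satisfies the voltage constraints
`v̲² ≤ V_u·u(t;ξ) + V_ξ·ξ(t) + v₀²·𝟏 ≤ v̄²` for every slow time-scale
trajectory in `Ξ`, then the same bounds hold for the fast time-scale inputs
and disturbances. -/
theorem statement_6 (n T K : ℕ) (hn : 0 < n) (hT : 0 < T) (hK : 0 < K)
    (Ξ : Set (ℝ × (Fin T → Fin n × Fin 3 → ℝ))) (hconv : Convex ℝ Ξ)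
    (ξ : ℕ → ℕ → Fin n × Fin 3 → ℝ)
    (hquasi : ∀ f : ℕ → ℕ, (∀ t, f t < K) →
      ((1 : ℝ), fun t : Fin T => ξ (f t) t) ∈ Ξ)
    (ubar : ℕ → Fin n × Fin 2 → ℝ)
    (Q : ℕ → ℕ → Matrix (Fin n × Fin 2) (Fin n × Fin 3) ℝ)
    (R X : Matrix (Fin n) (Fin n) ℝ) (v0 : ℝ)
    (vlo2 vhi2 : Fin n → ℝ)
    (hslow : ∀ ζ : ℕ → Fin n × Fin 3 → ℝ,
      ((1 : ℝ), fun s : Fin T => ζ s) ∈ Ξ → ∀ t < T, ∀ i,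
        vlo2 i ≤ (Vu n R X).mulVec (uslow ubar Q ζ t) i
            + (Vxi n R X).mulVec (ζ t) i + v0 ^ 2 ∧
        (Vu n R X).mulVec (uslow ubar Q ζ t) i
            + (Vxi n R X).mulVec (ζ t) i + v0 ^ 2 ≤ vhi2 i) :
    ∀ t < T, ∀ k < K, ∀ i,
      vlo2 i ≤ (Vu n R X).mulVec (ufast K ubar Q ξ k t) i
          + (Vxi n R X).mulVec (ξ k t) i + v0 ^ 2 ∧
      (Vu n R X).mulVec (ufast K ubar Q ξ k t) i
          + (Vxi n R X).mulVec (ξ k t) i + v0 ^ 2 ≤ vhi2 i :=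
  statement_6_general n T K Ξ hconv ξ hquasi ubar Q R X v0 vlo2 vhi2 hslow
end

section
/- (Fast time-scale inverter feasibility.) Let Ξ be convex, let the fast time-scale disturbance process satisfy quasi-stationarity, fix a ∈ ℝ^{2n}, c ∈ ℝ^{3n}, and s > 0. Suppose that for every ξ = (1, ξ(0), …, ξ(T−1)) ∈ Ξ and every t = 0,…,T−1, (a'·u(t;ξ))² + (c'·ξ(t))² ≤ s². Then for every t = 0,…,T−1 and every k = 0,…,K−1, (a'·u(k,t))² + (c'·ξ(k,t))² ≤ s². -/
open Matrix

/-! The fast time-scale pair `(u(k,t), ξ(k,t))` is the slow time-scale pair at time `t` of the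
trajectory that equals `ξ(k,t)` at time `t` and the averages `ξ̄(r)` at every other time `r`.
That trajectory is the average over `ℓ < K` of the selections `r ↦ ξ(if r = t then k else ℓ, r)`,
each of which lies in `Ξ` by quasi-stationarity, so it lies in `Ξ` by convexity and the slow
time-scale constraint applies to it. -/

theorem Convex.inv_natCast_smul_sum_mem {E : Type*} [AddCommGroup E] [Module ℝ E] {S : Set E}
    (hS : Convex ℝ S) {K : ℕ} (hK : 0 < K) {z : ℕ → E} (hz : ∀ ℓ < K, z ℓ ∈ S) :
    (K : ℝ)⁻¹ • ∑ ℓ ∈ Finset.range K, z ℓ ∈ S := by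
  rw [Finset.smul_sum]
  refine hS.sum_mem (fun _ _ => by positivity) ?_ fun ℓ hℓ => hz ℓ (Finset.mem_range.mp hℓ)
  rw [Finset.sum_const, Finset.card_range, nsmul_eq_mul]
  exact mul_inv_cancel₀ (Nat.cast_ne_zero.mpr hK.ne')

theorem slowAvg_eq_of_forall_eq {ι : Type*} {K : ℕ} (hK : 0 < K) {η : ℕ → ℕ → ι → ℝ} {t : ℕ}
    {v : ι → ℝ} (h : ∀ ℓ, η ℓ t = v) : slowAvg K η t = v := by
  rw [slowAvg, Finset.sum_congr rfl fun ℓ _ => h ℓ, Finset.sum_const, Finset.card_range,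
    ← Nat.cast_smul_eq_nsmul ℝ, smul_smul, inv_mul_cancel₀ (Nat.cast_ne_zero.mpr hK.ne'),
    one_smul]

theorem mk_one_slowAvg_mem {ι : Type*} {T K : ℕ} (hK : 0 < K) {Ξ : Set (ℝ × (Fin T → ι → ℝ))}
    (hconv : Convex ℝ Ξ) {η : ℕ → ℕ → ι → ℝ}
    (hη : ∀ ℓ < K, ((1 : ℝ), fun r : Fin T => η ℓ r) ∈ Ξ) :
    ((1 : ℝ), fun r : Fin T => slowAvg K η r) ∈ Ξ := by
  convert hconv.inv_natCast_smul_sum_mem hK hη using 1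
  ext r
  · simp [Prod.fst_sum, inv_mul_cancel₀ (Nat.cast_ne_zero.mpr hK.ne' : (K : ℝ) ≠ 0)]
  · simp [Prod.snd_sum, slowAvg, Finset.sum_apply]

noncomputable def fastSlice {ι : Type*} (K : ℕ) (ξ : ℕ → ℕ → ι → ℝ) (k t : ℕ) : ℕ → ι → ℝ :=
  fun r => if r = t then ξ k r else slowAvg K ξ r

@[simp]
theorem fastSlice_self {ι : Type*} (K : ℕ) (ξ : ℕ → ℕ → ι → ℝ) (k t : ℕ) :
    fastSlice K ξ k t t = ξ k t := if_pos rfl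

theorem fastSlice_eq_slowAvg {ι : Type*} {K : ℕ} (hK : 0 < K) (ξ : ℕ → ℕ → ι → ℝ) (k t : ℕ) :
    fastSlice K ξ k t = slowAvg K (fun ℓ r => ξ (if r = t then k else ℓ) r) := by
  funext r
  by_cases hr : r = t
  · rw [fastSlice, if_pos hr]
    exact (slowAvg_eq_of_forall_eq hK fun ℓ => by rw [if_pos hr]).symm
  · simp [fastSlice, slowAvg, hr]

theorem uslow_fastSlice {n : ℕ} (K : ℕ) (ubar : ℕ → Fin n × Fin 2 → ℝ)
    (Q : ℕ → ℕ → Matrix (Fin n × Fin 2) (Fin n × Fin 3) ℝ) (ξ : ℕ → ℕ → Fin n × Fin 3 → ℝ)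
    (k t : ℕ) : uslow ubar Q (fastSlice K ξ k t) t = ufast K ubar Q ξ k t := by
  have hpast : ∀ r ∈ Finset.range t,
      (Q t r).mulVec (fastSlice K ξ k t r) = (Q t r).mulVec (slowAvg K ξ r) := fun r hr => by
    rw [fastSlice, if_neg (Finset.mem_range.mp hr).ne]
  rw [uslow, ufast, Finset.sum_range_succ, Finset.sum_congr rfl hpast, fastSlice_self]
  abel

theorem statement_7_general (n T K : ℕ) (hK : 0 < K)
    (Ξ : Set (ℝ × (Fin T → Fin n × Fin 3 → ℝ))) (hconv : Convex ℝ Ξ)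
    (ξ : ℕ → ℕ → Fin n × Fin 3 → ℝ)
    (hquasi : ∀ f : ℕ → ℕ, (∀ t, f t < K) →
      ((1 : ℝ), fun t : Fin T => ξ (f t) t) ∈ Ξ)
    (ubar : ℕ → Fin n × Fin 2 → ℝ)
    (Q : ℕ → ℕ → Matrix (Fin n × Fin 2) (Fin n × Fin 3) ℝ)
    (a : Fin n × Fin 2 → ℝ) (c : Fin n × Fin 3 → ℝ) (s : ℝ)
    (hslow : ∀ ζ : ℕ → Fin n × Fin 3 → ℝ,
      ((1 : ℝ), fun r : Fin T => ζ r) ∈ Ξ → ∀ t < T,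
        (a ⬝ᵥ uslow ubar Q ζ t) ^ 2 + (c ⬝ᵥ ζ t) ^ 2 ≤ s ^ 2) :
    ∀ t < T, ∀ k < K,
      (a ⬝ᵥ ufast K ubar Q ξ k t) ^ 2 + (c ⬝ᵥ ξ k t) ^ 2 ≤ s ^ 2 := by
  intro t ht k hk
  have hmem : ((1 : ℝ), fun r : Fin T => fastSlice K ξ k t r) ∈ Ξ := by
    rw [fastSlice_eq_slowAvg hK]
    refine mk_one_slowAvg_mem hK hconv fun ℓ hℓ =>
      hquasi (fun r => if r = t then k else ℓ) fun r => ?_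
    split_ifs
    exacts [hk, hℓ]
  simpa only [uslow_fastSlice, fastSlice_self] using hslow _ hmem t ht

/-- fast time-scale inverter feasibility: if the affine policy
robustly satisfies the apparent power capacity constraint
`(a'·u(t;ξ))² + (c'·ξ(t))² ≤ s²` for every slow time-scale trajectory in `Ξ`,
then the same bound holds for the fast time-scale inputs and disturbances. -/
theorem statement_7 (n T K : ℕ) (hn : 0 < n) (hT : 0 < T) (hK : 0 < K)
    (Ξ : Set (ℝ × (Fin T → Fin n × Fin 3 → ℝ))) (hconv : Convex ℝ Ξ)
    (ξ : ℕ → ℕ → Fin n × Fin 3 → ℝ)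
    (hquasi : ∀ f : ℕ → ℕ, (∀ t, f t < K) →
      ((1 : ℝ), fun t : Fin T => ξ (f t) t) ∈ Ξ)
    (ubar : ℕ → Fin n × Fin 2 → ℝ)
    (Q : ℕ → ℕ → Matrix (Fin n × Fin 2) (Fin n × Fin 3) ℝ)
    (a : Fin n × Fin 2 → ℝ) (c : Fin n × Fin 3 → ℝ) (s : ℝ) (hs : 0 < s)
    (hslow : ∀ ζ : ℕ → Fin n × Fin 3 → ℝ,
      ((1 : ℝ), fun r : Fin T => ζ r) ∈ Ξ → ∀ t < T,
        (a ⬝ᵥ uslow ubar Q ζ t) ^ 2 + (c ⬝ᵥ ζ t) ^ 2 ≤ s ^ 2) :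
    ∀ t < T, ∀ k < K,
      (a ⬝ᵥ ufast K ubar Q ξ k t) ^ 2 + (c ⬝ᵥ ξ k t) ^ 2 ≤ s ^ 2 :=
  statement_7_general n T K hK Ξ hconv ξ hquasi ubar Q a c s hslow
end

section
/- (Proposition 1, constraint reformulation.) Let K ⊆ ℝ^ℓ be a proper cone with dual cone K*, let W ∈ ℝ^{ℓ×N}, and define Ξ = {ξ ∈ ℝ^N : e₁'ξ = 1, Wξ ∈ K}. Assume Ξ is compact and there exists ξ₀ with e₁'ξ₀ = 1 and Wξ₀ in the interior of K. Then a matrix F ∈ ℝ^{m×N} satisfies F·ξ ≤ 0 componentwise for every ξ ∈ Ξ if and only if there exist Z ∈ ℝ^{m×N}, ν ∈ ℝ^m with ν ≥ 0 componentwise, and Π ∈ ℝ^{ℓ×m} with every column of Π in K*, such that F + Z = 0 and Z = ν·e₁' + Π'·W. -/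
open Matrix

/-!
Write `D = ℝ₊ e₁ + Wᵀ K*`. Every element of `D` is nonnegative on `Ξ`; the point is the converse,
applied to the rows of `-F`. The Slater point `ξ₀` gives `‖π‖ ≤ C (π ⬝ W ξ₀)` on `K*`, so
`d ↦ d ⬝ ξ₀` controls the generators `(ν, π)` and `D` is closed. By the bipolar theorem it then
suffices to test `f` against every `g` that is nonnegative on `D`. Such a `g` has `g₁ ≥ 0` and
`W g ∈ K** = K`: if `g₁ > 0` then `g / g₁ ∈ Ξ`, and if `g₁ = 0` then `g` is a recession direction of
the compact set `Ξ`, hence zero.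
-/

open Set Bornology

theorem Convex.add_mem_of_smul_mem {E : Type*} [AddCommGroup E] [Module ℝ E] {S : Set E}
    (hconv : Convex ℝ S) (hcone : ∀ c : ℝ, 0 ≤ c → ∀ x ∈ S, c • x ∈ S) {x y : E}
    (hx : x ∈ S) (hy : y ∈ S) : x + y ∈ S := by
  have hmid := hcone 2 zero_le_two _ (hconv hx hy (by norm_num : (0 : ℝ) ≤ 1 / 2)
    (by norm_num : (0 : ℝ) ≤ 1 / 2) (by norm_num))
  rwa [smul_add, smul_smul, smul_smul, show (2 : ℝ) * (1 / 2) = 1 by norm_num, one_smul,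
    one_smul] at hmid

theorem mem_of_forall_dotProduct_nonneg {ι : Type*} [Fintype ι] {S : Set (ι → ℝ)}
    (hconv : Convex ℝ S) (hclosed : IsClosed S) (hcone : ∀ c : ℝ, 0 ≤ c → ∀ x ∈ S, c • x ∈ S)
    (hne : S.Nonempty) {x : ι → ℝ} (hx : ∀ π : ι → ℝ, (∀ y ∈ S, 0 ≤ π ⬝ᵥ y) → 0 ≤ π ⬝ᵥ x) :
    x ∈ S := by
  classical
  obtain ⟨y, hy⟩ := hne
  let C : ProperCone ℝ (ι → ℝ) :=
    { carrier := S
      zero_mem' := by simpa using hcone 0 le_rfl y hy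
      add_mem' := hconv.add_mem_of_smul_mem hcone
      smul_mem' := fun c z hz => hcone c c.2 z hz
      isClosed' := hclosed }
  by_contra hxS
  obtain ⟨f, hfC, hfx⟩ := C.hyperplane_separation_point (x₀ := x) hxS
  have hf : ∀ z, f z = (dotProductEquiv ℝ ι).symm f.toLinearMap ⬝ᵥ z := fun z =>
    (LinearMap.congr_fun ((dotProductEquiv ℝ ι).apply_symm_apply f.toLinearMap) z).symm
  exact hfx.not_ge (hf x ▸ hx _ fun z hz => hf z ▸ hfC z hz)

theorem isClosed_image_of_norm_le {E F : Type*} [SeminormedAddCommGroup E] [ProperSpace E]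
    [TopologicalSpace F] [T2Space F] {f : E → F} (hf : Continuous f) {s : Set E}
    (hs : IsClosed s) {g : F → ℝ} (hg : Continuous g) (hbound : ∀ x ∈ s, ‖x‖ ≤ g (f x)) :
    IsClosed (f '' s) := by
  refine isClosed_of_closure_subset fun y hy => ?_
  set M := g y + 1
  have hcpt : IsCompact (f '' (s ∩ Metric.closedBall 0 M)) :=
    ((isCompact_closedBall 0 M).inter_left hs).image hf
  have hsub : {z | g z < M} ∩ f '' s ⊆ f '' (s ∩ Metric.closedBall 0 M) := by
    rintro _ ⟨hz, x, hx, rfl⟩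
    exact ⟨x, ⟨hx, by simpa using (hbound x hx).trans hz.le⟩, rfl⟩
  have hy' : y ∈ closure ({z | g z < M} ∩ f '' s) :=
    (isOpen_lt hg continuous_const).inter_closure ⟨by simp [M], hy⟩
  exact image_mono inter_subset_left (hcpt.isClosed.closure_subset (closure_mono hsub hy'))

theorem eq_zero_of_isBounded_of_add_smul_mem {E : Type*} [NormedAddCommGroup E]
    [NormedSpace ℝ E] {S : Set E} (hS : IsBounded S) {x v : E}
    (hray : ∀ t : ℝ, 0 ≤ t → x + t • v ∈ S) : v = 0 := by
  obtain ⟨R, hR⟩ := hS.subset_closedBall x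
  by_contra hv
  have hv : 0 < ‖v‖ := norm_pos_iff.2 hv
  have ht : 0 ≤ (|R| + 1) / ‖v‖ := by positivity
  have hmem := hR (hray _ ht)
  rw [Metric.mem_closedBall, dist_eq_norm, add_sub_cancel_left, norm_smul,
    Real.norm_of_nonneg ht, div_mul_cancel₀ _ hv.ne'] at hmem
  linarith [le_abs_self R]

section ConicConstraint

variable {ι κ : Type*} [Fintype κ]

def dualCone (K : Set (κ → ℝ)) : Set (κ → ℝ) := {π | ∀ x ∈ K, 0 ≤ π ⬝ᵥ x}

theorem convex_dualCone (K : Set (κ → ℝ)) : Convex ℝ (dualCone K) := by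
  intro π hπ π' hπ' a b ha hb _ x hx
  simp only [add_dotProduct, smul_dotProduct, smul_eq_mul]
  have := hπ x hx
  have := hπ' x hx
  positivity

theorem zero_mem_dualCone (K : Set (κ → ℝ)) : 0 ∈ dualCone K := fun x _ => by
  rw [zero_dotProduct]

theorem smul_mem_dualCone {K : Set (κ → ℝ)} {c : ℝ} (hc : 0 ≤ c) {π : κ → ℝ}
    (hπ : π ∈ dualCone K) : c • π ∈ dualCone K := fun x hx => by
  simpa only [smul_dotProduct, smul_eq_mul] using mul_nonneg hc (hπ x hx)

theorem isClosed_dualCone (K : Set (κ → ℝ)) : IsClosed (dualCone K) := by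
  simp only [dualCone, ofPred_forall]
  exact isClosed_biInter fun x _ =>
    isClosed_le continuous_const (continuous_id.dotProduct continuous_const)

theorem exists_norm_le_mul_dotProduct_of_mem_interior {K : Set (κ → ℝ)}
    {y : κ → ℝ} (hy : y ∈ interior K) : ∃ C, ∀ π ∈ dualCone K, ‖π‖ ≤ C * (π ⬝ᵥ y) := by
  classical
  obtain ⟨ε, hε, hball⟩ := Metric.mem_nhds_iff.1 (mem_interior_iff_mem_nhds.1 hy)
  refine ⟨2 / ε, fun π hπ => (pi_norm_le_iff_of_nonneg ?_).2 fun i => ?_⟩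
  · exact mul_nonneg (by positivity) (hπ y (interior_subset hy))
  · have hcoord : ∀ s, |s| ≤ ε / 2 → π i * s ≤ π ⬝ᵥ y := fun s hs => by
      have hz : y - Pi.single i s ∈ K := hball <| by
        rw [Metric.mem_ball, dist_eq_norm, sub_sub_cancel_left, norm_neg, Pi.norm_single,
          Real.norm_eq_abs]
        linarith
      have := hπ _ hz
      rw [dotProduct_sub, dotProduct_single] at this
      linarith
    have h₁ := hcoord (ε / 2) (by rw [abs_of_pos (by positivity)])
    have h₂ := hcoord (-(ε / 2)) (by rw [abs_neg, abs_of_pos (by positivity)])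
    rw [Real.norm_eq_abs, div_mul_eq_mul_div, le_div_iff₀ hε]
    obtain ⟨habs, -⟩ | ⟨habs, -⟩ := abs_cases (π i) <;> rw [habs] <;> linarith

variable [DecidableEq ι]

def certificateMap (W : Matrix κ ι ℝ) (i₀ : ι) : ℝ × (κ → ℝ) →ₗ[ℝ] ι → ℝ :=
  (LinearMap.toSpanSingleton ℝ _ (Pi.single i₀ 1)).coprod W.vecMulLinear

/-- `ℝ₊ e₁ + Wᵀ K*`, the set of the paper's certificates `ν e₁' + π' W`,
with `e₁ = Pi.single i₀ 1`. -/
def certificateCone (W : Matrix κ ι ℝ) (i₀ : ι) (K : Set (κ → ℝ)) : Set (ι → ℝ) :=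
  certificateMap W i₀ '' (Ici 0 ×ˢ dualCone K)

variable {W : Matrix κ ι ℝ} {i₀ : ι} {K : Set (κ → ℝ)}

theorem certificateMap_apply (q : ℝ × (κ → ℝ)) :
    certificateMap W i₀ q = q.1 • Pi.single i₀ 1 + q.2 ᵥ* W := rfl

theorem mem_certificateCone {f : ι → ℝ} :
    f ∈ certificateCone W i₀ K ↔
      ∃ ν : ℝ, 0 ≤ ν ∧ ∃ π ∈ dualCone K, ν • Pi.single i₀ 1 + π ᵥ* W = f := by
  simp only [certificateCone, mem_image, Prod.exists, mem_prod, mem_Ici, certificateMap_apply,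
    and_assoc, exists_and_left]

theorem convex_certificateCone : Convex ℝ (certificateCone W i₀ K) :=
  ((convex_Ici 0).prod (convex_dualCone K)).linear_image _

theorem smul_mem_certificateCone {c : ℝ} (hc : 0 ≤ c) {f : ι → ℝ}
    (hf : f ∈ certificateCone W i₀ K) : c • f ∈ certificateCone W i₀ K := by
  obtain ⟨q, ⟨hq₁, hq₂⟩, rfl⟩ := hf
  exact ⟨c • q, ⟨mul_nonneg hc hq₁, smul_mem_dualCone hc hq₂⟩, map_smul _ _ _⟩

theorem single_mem_certificateCone : Pi.single i₀ 1 ∈ certificateCone W i₀ K :=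
  ⟨(1, 0), ⟨mem_Ici.2 zero_le_one, zero_mem_dualCone K⟩, by simp [certificateMap_apply]⟩

theorem vecMul_mem_certificateCone {π : κ → ℝ} (hπ : π ∈ dualCone K) :
    π ᵥ* W ∈ certificateCone W i₀ K :=
  ⟨(0, π), ⟨mem_Ici.2 le_rfl, hπ⟩, by simp [certificateMap_apply]⟩

theorem vecMulVec_add_transpose_mul_apply {m : Type*} (ν : m → ℝ) (P : Matrix κ m ℝ) (i : m) :
    (vecMulVec ν (Pi.single i₀ 1) + Pᵀ * W) i = ν i • Pi.single i₀ 1 + Pᵀ i ᵥ* W := by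
  ext j
  simp [vecMulVec_apply, mul_apply, vecMul, dotProduct]

theorem forall_row_mem_certificateCone_iff {m : Type*} (Z : Matrix m ι ℝ) :
    (∀ i, Z i ∈ certificateCone W i₀ K) ↔
      ∃ (ν : m → ℝ) (P : Matrix κ m ℝ), (∀ i, 0 ≤ ν i) ∧ (∀ j, Pᵀ j ∈ dualCone K) ∧
        Z = vecMulVec ν (Pi.single i₀ 1) + Pᵀ * W := by
  simp only [mem_certificateCone]
  constructor
  · intro hZ
    choose ν hν π hπ hZ using hZ
    exact ⟨ν, (of π)ᵀ, hν, hπ, funext fun i => by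
      rw [vecMulVec_add_transpose_mul_apply]; exact (hZ i).symm⟩
  · rintro ⟨ν, P, hν, hP, rfl⟩ i
    exact ⟨ν i, hν i, Pᵀ i, hP i, (vecMulVec_add_transpose_mul_apply ν P i).symm⟩

variable [Fintype ι]

theorem certificateMap_dotProduct (q : ℝ × (κ → ℝ)) (ξ : ι → ℝ) :
    certificateMap W i₀ q ⬝ᵥ ξ = q.1 * ξ i₀ + q.2 ⬝ᵥ W *ᵥ ξ := by
  rw [certificateMap_apply, add_dotProduct, smul_dotProduct, single_dotProduct, one_mul,
    smul_eq_mul, dotProduct_mulVec]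

theorem dotProduct_nonneg_of_mem_certificateCone {f ξ : ι → ℝ}
    (hf : f ∈ certificateCone W i₀ K) (hξ : 0 ≤ ξ i₀) (hWξ : W *ᵥ ξ ∈ K) : 0 ≤ f ⬝ᵥ ξ := by
  obtain ⟨q, ⟨hq₁, hq₂⟩, rfl⟩ := hf
  rw [certificateMap_dotProduct]
  exact add_nonneg (mul_nonneg hq₁ hξ) (hq₂ _ hWξ)

theorem isClosed_certificateCone {ξ₀ : ι → ℝ} (hξ₀ : ξ₀ i₀ = 1)
    (hint : W *ᵥ ξ₀ ∈ interior K) : IsClosed (certificateCone W i₀ K) := by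
  obtain ⟨C, hC⟩ := exists_norm_le_mul_dotProduct_of_mem_interior hint
  refine isClosed_image_of_norm_le (LinearMap.continuous_of_finiteDimensional _)
    (isClosed_Ici.prod (isClosed_dualCone K)) (g := fun f => max 1 C * (f ⬝ᵥ ξ₀))
    (continuous_const.mul (continuous_id.dotProduct continuous_const)) ?_
  rintro ⟨ν, π⟩ hq
  obtain ⟨hν, hπ⟩ : 0 ≤ ν ∧ π ∈ dualCone K := hq
  have hπξ₀ : 0 ≤ π ⬝ᵥ W *ᵥ ξ₀ := hπ _ (interior_subset hint)
  simp only [certificateMap_dotProduct, hξ₀, mul_one, Prod.norm_def, Real.norm_of_nonneg hν]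
  refine max_le ?_ ((hC π hπ).trans ?_)
  · nlinarith [le_max_left 1 C]
  · nlinarith [mul_le_mul_of_nonneg_right (le_max_right 1 C) hπξ₀,
      mul_nonneg (zero_le_one.trans (le_max_left 1 C)) hν]

theorem mem_certificateCone_of_forall_dotProduct_nonneg (hKconv : Convex ℝ K)
    (hKclosed : IsClosed K) (hKcone : ∀ c : ℝ, 0 ≤ c → ∀ x ∈ K, c • x ∈ K)
    (hbdd : IsBounded {ξ : ι → ℝ | ξ i₀ = 1 ∧ W *ᵥ ξ ∈ K}) {ξ₀ : ι → ℝ} (hξ₀ : ξ₀ i₀ = 1)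
    (hint : W *ᵥ ξ₀ ∈ interior K) {f : ι → ℝ}
    (hf : ∀ ξ : ι → ℝ, ξ i₀ = 1 → W *ᵥ ξ ∈ K → 0 ≤ f ⬝ᵥ ξ) : f ∈ certificateCone W i₀ K := by
  refine mem_of_forall_dotProduct_nonneg convex_certificateCone
    (isClosed_certificateCone hξ₀ hint) (fun c hc _ => smul_mem_certificateCone hc)
    ⟨_, single_mem_certificateCone⟩ fun g hg => ?_
  have hg₀ : 0 ≤ g i₀ := by
    simpa [dotProduct_single] using hg _ single_mem_certificateCone
  have hWg : W *ᵥ g ∈ K := by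
    refine mem_of_forall_dotProduct_nonneg hKconv hKclosed hKcone ⟨_, interior_subset hint⟩
      fun π hπ => ?_
    rw [dotProduct_mulVec, dotProduct_comm]
    exact hg _ (vecMul_mem_certificateCone hπ)
  rcases hg₀.eq_or_lt with hg₀ | hg₀
  · have hg : g = 0 := eq_zero_of_isBounded_of_add_smul_mem (x := ξ₀) hbdd fun t ht =>
      ⟨by simp [hξ₀, ← hg₀], by
        rw [mulVec_add, mulVec_smul]
        exact hKconv.add_mem_of_smul_mem hKcone (interior_subset hint) (hKcone t ht _ hWg)⟩
    rw [hg, zero_dotProduct]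
  · have hξ := hf ((g i₀)⁻¹ • g) (by simp [hg₀.ne'])
      (by rw [mulVec_smul]; exact hKcone _ (inv_nonneg.2 hg₀.le) _ hWg)
    rw [dotProduct_smul, smul_eq_mul, mul_nonneg_iff_of_pos_left (inv_pos.2 hg₀)] at hξ
    rwa [dotProduct_comm]

theorem mem_certificateCone_iff (hKconv : Convex ℝ K) (hKclosed : IsClosed K)
    (hKcone : ∀ c : ℝ, 0 ≤ c → ∀ x ∈ K, c • x ∈ K)
    (hbdd : IsBounded {ξ : ι → ℝ | ξ i₀ = 1 ∧ W *ᵥ ξ ∈ K}) {ξ₀ : ι → ℝ} (hξ₀ : ξ₀ i₀ = 1)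
    (hint : W *ᵥ ξ₀ ∈ interior K) {f : ι → ℝ} :
    f ∈ certificateCone W i₀ K ↔ ∀ ξ : ι → ℝ, ξ i₀ = 1 → W *ᵥ ξ ∈ K → 0 ≤ f ⬝ᵥ ξ :=
  ⟨fun hf _ hξ hWξ => dotProduct_nonneg_of_mem_certificateCone hf (hξ ▸ zero_le_one) hWξ,
    mem_certificateCone_of_forall_dotProduct_nonneg hKconv hKclosed hKcone hbdd hξ₀ hint⟩

end ConicConstraint

theorem statement_12_general (N l m : ℕ) (hN : 0 < N)
    (Kc : Set (Fin l → ℝ)) (hKconv : Convex ℝ Kc) (hKclosed : IsClosed Kc)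
    (hKcone : ∀ c : ℝ, 0 ≤ c → ∀ x ∈ Kc, c • x ∈ Kc)
    (W : Matrix (Fin l) (Fin N) ℝ)
    (hcpt : IsCompact {ξ : Fin N → ℝ | ξ ⟨0, hN⟩ = 1 ∧ W.mulVec ξ ∈ Kc})
    (ξ₀ : Fin N → ℝ) (hξ₀1 : ξ₀ ⟨0, hN⟩ = 1)
    (hξ₀int : W.mulVec ξ₀ ∈ interior Kc)
    (F : Matrix (Fin m) (Fin N) ℝ) :
    (∀ ξ : Fin N → ℝ, ξ ⟨0, hN⟩ = 1 → W.mulVec ξ ∈ Kc →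
      ∀ i, F.mulVec ξ i ≤ 0)
    ↔ ∃ (Z : Matrix (Fin m) (Fin N) ℝ) (ν : Fin m → ℝ)
        (P : Matrix (Fin l) (Fin m) ℝ),
        (∀ i, 0 ≤ ν i) ∧ (∀ j, ∀ x ∈ Kc, 0 ≤ (fun i => P i j) ⬝ᵥ x) ∧
        F + Z = 0 ∧
        Z = Matrix.vecMulVec ν
            (fun j : Fin N => if j = ⟨0, hN⟩ then (1 : ℝ) else 0)
          + P.transpose * W := by
  have he : (fun j : Fin N => if j = ⟨0, hN⟩ then (1 : ℝ) else 0) = Pi.single ⟨0, hN⟩ 1 :=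
    funext fun j => (Pi.single_apply _ _ j).symm
  have hrow : ∀ i, (-F) i ∈ certificateCone W ⟨0, hN⟩ Kc ↔
      ∀ ξ : Fin N → ℝ, ξ ⟨0, hN⟩ = 1 → W *ᵥ ξ ∈ Kc → (F *ᵥ ξ) i ≤ 0 := fun i => by
    simp only [mem_certificateCone_iff hKconv hKclosed hKcone hcpt.isBounded hξ₀1 hξ₀int,
      show (-F) i = -F i from rfl, neg_dotProduct, neg_nonneg]
    rfl
  rw [he]
  calc _ ↔ ∀ i, (-F) i ∈ certificateCone W ⟨0, hN⟩ Kc := by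
        simp only [hrow]
        exact ⟨fun h i ξ hξ hWξ => h ξ hξ hWξ i, fun h ξ hξ hWξ i => h i ξ hξ hWξ⟩
    _ ↔ _ := forall_row_mem_certificateCone_iff (-F)
    _ ↔ _ := ⟨fun ⟨ν, P, hν, hP, hF⟩ => ⟨-F, ν, P, hν, hP, add_neg_cancel F, hF⟩,
        fun ⟨_, ν, P, hν, hP, hFZ, hZ⟩ =>
          ⟨ν, P, hν, hP, (neg_eq_of_add_eq_zero_right hFZ).trans hZ⟩⟩

/-- Proposition 1, constraint reformulation: for a proper cone
`K`, `Ξ = {ξ : e₁'ξ = 1, Wξ ∈ K}` compact with a Slater point, a matrix `F`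
satisfies `F·ξ ≤ 0` componentwise for every `ξ ∈ Ξ` if and only if there exist
`Z`, `ν ≥ 0`, and `Π` with columns in `K*` such that `F + Z = 0` and
`Z = ν·e₁' + Π'·W`. -/
theorem statement_12 (N l m : ℕ) (hN : 0 < N)
    (Kc : Set (Fin l → ℝ)) (hKconv : Convex ℝ Kc) (hKclosed : IsClosed Kc)
    (hKcone : ∀ c : ℝ, 0 ≤ c → ∀ x ∈ Kc, c • x ∈ Kc)
    (hKpointed : ∀ x ∈ Kc, -x ∈ Kc → x = 0)
    (hKint : (interior Kc).Nonempty)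
    (W : Matrix (Fin l) (Fin N) ℝ)
    (hcpt : IsCompact {ξ : Fin N → ℝ | ξ ⟨0, hN⟩ = 1 ∧ W.mulVec ξ ∈ Kc})
    (ξ₀ : Fin N → ℝ) (hξ₀1 : ξ₀ ⟨0, hN⟩ = 1)
    (hξ₀int : W.mulVec ξ₀ ∈ interior Kc)
    (F : Matrix (Fin m) (Fin N) ℝ) :
    (∀ ξ : Fin N → ℝ, ξ ⟨0, hN⟩ = 1 → W.mulVec ξ ∈ Kc →
      ∀ i, F.mulVec ξ i ≤ 0)
    ↔ ∃ (Z : Matrix (Fin m) (Fin N) ℝ) (ν : Fin m → ℝ)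
        (P : Matrix (Fin l) (Fin m) ℝ),
        (∀ i, 0 ≤ ν i) ∧ (∀ j, ∀ x ∈ Kc, 0 ≤ (fun i => P i j) ⬝ᵥ x) ∧
        F + Z = 0 ∧
        Z = Matrix.vecMulVec ν
            (fun j : Fin N => if j = ⟨0, hN⟩ then (1 : ℝ) else 0)
          + P.transpose * W :=
  statement_12_general N l m hN Kc hKconv hKclosed hKcone W hcpt ξ₀ hξ₀1 hξ₀int F
end

section
/- (Relaxed conic constraints from robust feasibility.) Let K ⊆ ℝ^ℓ be a closed convex cone, W ∈ ℝ^{ℓ×N}, and Ξ = {ξ ∈ ℝ^N : e₁'ξ = 1, Wξ ∈ K}. Let ξ be a random vector taking values in Ξ almost surely with E‖ξ‖² < ∞, and let M = E[ξ·ξ']. If Z ∈ ℝ^{m×N} satisfies Z·ξ ≥ 0 componentwise for every ξ ∈ Ξ, then every column of the matrix W·M·Z' lies in K, and e₁'·M·Z' ≥ 0 componentwise. -/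
open Matrix MeasureTheory

/-- relaxed conic constraints from robust feasibility: let `K`
be a closed convex cone, `Ξ = {ξ : e₁'ξ = 1, Wξ ∈ K}`, and let `ξ` be a random
vector taking values in `Ξ` a.s. with `E‖ξ‖² < ∞` and `M = E[ξξ']`.  If
`Z·ξ ≥ 0` componentwise for every `ξ ∈ Ξ`, then every column of `W·M·Z'` lies
in `K` and `e₁'·M·Z' ≥ 0` componentwise. -/
theorem statement_14 (N l m : ℕ) (hN : 0 < N)
    (Kc : Set (Fin l → ℝ)) (hKconv : Convex ℝ Kc) (hKclosed : IsClosed Kc)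
    (hKcone : ∀ c : ℝ, 0 ≤ c → ∀ x ∈ Kc, c • x ∈ Kc)
    (W : Matrix (Fin l) (Fin N) ℝ)
    {Ω : Type*} [MeasurableSpace Ω] (μ : Measure Ω) [IsProbabilityMeasure μ]
    (ξ : Ω → Fin N → ℝ) (hmeas : Measurable ξ)
    (hsupp : ∀ᵐ ω ∂μ, ξ ω ⟨0, hN⟩ = 1 ∧ W.mulVec (ξ ω) ∈ Kc)
    (hL2 : Integrable (fun ω => ‖ξ ω‖ ^ 2) μ)
    (M : Matrix (Fin N) (Fin N) ℝ)
    (hM : ∀ i j, M i j = ∫ ω, ξ ω i * ξ ω j ∂μ)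
    (Z : Matrix (Fin m) (Fin N) ℝ)
    (hZ : ∀ ξ' : Fin N → ℝ, ξ' ⟨0, hN⟩ = 1 → W.mulVec ξ' ∈ Kc →
      ∀ i, 0 ≤ Z.mulVec ξ' i) :
    (∀ j, (fun i => (W * M * Z.transpose) i j) ∈ Kc) ∧
    (∀ j, 0 ≤ Matrix.vecMul
      (fun i : Fin N => if i = ⟨0, hN⟩ then (1 : ℝ) else 0)
      (M * Z.transpose) j) := by
  -- integrability of products of components
  have hint : ∀ a b : Fin N, Integrable (fun ω => ξ ω a * ξ ω b) μ := by
    intro a b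
    refine hL2.mono ?_ ?_
    · exact (((measurable_pi_apply a).comp hmeas).mul
        ((measurable_pi_apply b).comp hmeas)).aestronglyMeasurable
    · refine Filter.Eventually.of_forall fun ω => ?_
      have ha : |ξ ω a| ≤ ‖ξ ω‖ := by
        simpa using norm_le_pi_norm (ξ ω) a
      have hb : |ξ ω b| ≤ ‖ξ ω‖ := by
        simpa using norm_le_pi_norm (ξ ω) b
      rw [Real.norm_eq_abs, Real.norm_eq_abs, abs_pow, abs_norm, abs_mul, sq]
      exact mul_le_mul ha hb (abs_nonneg _) (norm_nonneg _)
  constructor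
  · intro j
    set f : Ω → Fin l → ℝ := fun ω => (Z.mulVec (ξ ω) j) • W.mulVec (ξ ω) with hf
    have hfc : ∀ ω i, f ω i = ∑ a, ∑ b, (W i a * Z j b) * (ξ ω a * ξ ω b) := by
      intro ω i
      simp only [hf, Pi.smul_apply, smul_eq_mul, Matrix.mulVec, dotProduct]
      rw [Finset.sum_mul_sum]
      rw [Finset.sum_comm]
      apply Finset.sum_congr rfl; intro a _
      apply Finset.sum_congr rfl; intro b _
      ring
    have hfi : ∀ i, Integrable (fun ω => f ω i) μ := by
      intro i
      have : Integrable (fun ω => ∑ a, ∑ b, (W i a * Z j b) * (ξ ω a * ξ ω b)) μ := by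
        apply integrable_finset_sum _ fun a _ => ?_
        apply integrable_finset_sum _ fun b _ => ?_
        exact (hint a b).const_mul _
      exact this.congr (Filter.Eventually.of_forall fun ω => (hfc ω i).symm)
    have hfint : Integrable f μ := by
      have hfm : AEStronglyMeasurable f μ := by
        apply Measurable.aestronglyMeasurable
        apply measurable_pi_lambda
        intro i
        have : (fun ω => f ω i)
            = fun ω => ∑ a, ∑ b, (W i a * Z j b) * (ξ ω a * ξ ω b) := by
          funext ω; exact hfc ω i
        rw [this]
        exact Finset.measurable_sum _ fun a _ => Finset.measurable_sum _ fun b _ =>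
          (((measurable_pi_apply a).comp hmeas).mul
            ((measurable_pi_apply b).comp hmeas)).const_mul _
      refine Integrable.mono' (g := fun ω =>
        ((∑ b, |Z j b|) * ∑ i, ∑ a, |W i a|) * ‖ξ ω‖ ^ 2)
        (hL2.const_mul _) hfm ?_
      refine Filter.Eventually.of_forall fun ω => ?_
      have hc : |Z.mulVec (ξ ω) j| ≤ (∑ b, |Z j b|) * ‖ξ ω‖ := by
        rw [Finset.sum_mul]
        simp only [Matrix.mulVec, dotProduct]
        refine (Finset.abs_sum_le_sum_abs _ _).trans (Finset.sum_le_sum fun b _ => ?_)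
        rw [abs_mul]
        exact mul_le_mul_of_nonneg_left (by simpa using norm_le_pi_norm (ξ ω) b)
          (abs_nonneg _)
      have hv : ‖W.mulVec (ξ ω)‖ ≤ (∑ i, ∑ a, |W i a|) * ‖ξ ω‖ := by
        refine pi_norm_le_iff_of_nonneg (by positivity) |>.2 fun i => ?_
        have h1 : |W.mulVec (ξ ω) i| ≤ (∑ a, |W i a|) * ‖ξ ω‖ := by
          rw [Finset.sum_mul]
          simp only [Matrix.mulVec, dotProduct]
          refine (Finset.abs_sum_le_sum_abs _ _).trans
            (Finset.sum_le_sum fun a _ => ?_)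
          rw [abs_mul]
          exact mul_le_mul_of_nonneg_left
            (by simpa using norm_le_pi_norm (ξ ω) a) (abs_nonneg _)
        refine h1.trans (mul_le_mul_of_nonneg_right ?_ (norm_nonneg _))
        exact Finset.single_le_sum (f := fun i => ∑ a, |W i a|)
          (fun i _ => Finset.sum_nonneg fun a _ => abs_nonneg _) (Finset.mem_univ i)
      have : ‖f ω‖ = |Z.mulVec (ξ ω) j| * ‖W.mulVec (ξ ω)‖ := by
        simp [hf, norm_smul]
      rw [this]
      calc |Z.mulVec (ξ ω) j| * ‖W.mulVec (ξ ω)‖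
          ≤ ((∑ b, |Z j b|) * ‖ξ ω‖) * ((∑ i, ∑ a, |W i a|) * ‖ξ ω‖) :=
            mul_le_mul hc hv (norm_nonneg _) (by positivity)
        _ = ((∑ b, |Z j b|) * ∑ i, ∑ a, |W i a|) * ‖ξ ω‖ ^ 2 := by ring
    have hmem : ∀ᵐ ω ∂μ, f ω ∈ Kc := by
      filter_upwards [hsupp] with ω ⟨h1, h2⟩
      exact hKcone _ (hZ (ξ ω) h1 h2 j) _ h2
    have hKc : (∫ ω, f ω ∂μ) ∈ Kc := hKconv.integral_mem hKclosed hmem hfint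
    have hcol : (fun i => (W * M * Z.transpose) i j) = ∫ ω, f ω ∂μ := by
      funext i
      have := (ContinuousLinearMap.proj (R := ℝ) (φ := fun _ : Fin l => ℝ)
        i).integral_comp_comm hfint
      simp only [ContinuousLinearMap.proj_apply] at this
      rw [← this]
      have : ∫ ω, f ω i ∂μ = ∑ a, ∑ b, (W i a * Z j b) * M a b := by
        rw [integral_congr_ae (Filter.Eventually.of_forall fun ω => hfc ω i)]
        rw [integral_finset_sum _ fun a _ => integrable_finset_sum _
          fun b _ => (hint a b).const_mul _]
        refine Finset.sum_congr rfl fun a _ => ?_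
        rw [integral_finset_sum _ fun b _ => (hint a b).const_mul _]
        exact Finset.sum_congr rfl fun b _ => by rw [integral_const_mul, hM]
      rw [this]
      simp only [Matrix.mul_apply, Matrix.transpose_apply]
      rw [Finset.sum_comm]
      refine Finset.sum_congr rfl fun b _ => ?_
      rw [Finset.sum_mul]
      exact Finset.sum_congr rfl fun a _ => by ring
    rw [hcol]
    exact hKc
  · intro j
    have hv : Matrix.vecMul (fun i : Fin N => if i = ⟨0, hN⟩ then (1 : ℝ) else 0)
        (M * Z.transpose) j = ∑ b, M ⟨0, hN⟩ b * Z j b := by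
      rw [Matrix.vecMul, dotProduct]
      rw [Finset.sum_eq_single (⟨0, hN⟩ : Fin N)]
      · simp [Matrix.mul_apply]
      · intro a _ ha; simp [ha]
      · intro h; exact absurd (Finset.mem_univ _) h
    rw [hv]
    have : ∑ b, M ⟨0, hN⟩ b * Z j b
        = ∫ ω, ∑ b, Z j b * (ξ ω ⟨0, hN⟩ * ξ ω b) ∂μ := by
      rw [integral_finset_sum _ fun b _ => (hint _ b).const_mul _]
      exact Finset.sum_congr rfl fun b _ => by
        rw [integral_const_mul, hM]; ring
    rw [this]
    apply integral_nonneg_of_ae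
    filter_upwards [hsupp] with ω ⟨h1, h2⟩
    have := hZ (ξ ω) h1 h2 j
    simp only [h1, one_mul]
    simpa [Matrix.mulVec, dotProduct, mul_comm] using this
end

section
/- (Closed-form linearized Distflow voltage equation, Eq. (8).) Let G be a finite rooted tree with vertex set V = {0, 1, …, n}, root 0, and edge parameters r_{ij}, x_{ij} ∈ ℝ. Suppose real numbers p_j, q_j (j = 1,…,n), p_{ij}, q_{ij} (edges (i,j)), and w_j (j ∈ V) satisfy the linearized branch flow equations: for every nonroot vertex j with parent i, (i) −p_j = p_{ij} − Σ_{k:(j,k)∈E} p_{jk}, (ii) −q_j = q_{ij} − Σ_{k:(j,k)∈E} q_{jk}, and (iii) w_j = w_i − 2·(r_{ij}·p_{ij} + x_{ij}·q_{ij}). Then for every vertex j = 1,…,n, w_j = w_0 + Σ_{i=1}^{n} ( R_{ji}·p_i + X_{ji}·q_i ), where R_{ji} = 2·Σ_{(h,k) ∈ P_j ∩ P_i} r_{hk} and X_{ji} = 2·Σ_{(h,k) ∈ P_j ∩ P_i} x_{hk}. -/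
/-- The path edge set `P_j`: the set of edges on the unique path from the root
`0` to `j`, each edge being identified by its child endpoint `k` (so `k ≠ 0`
and some iterate of the parent map sends `j` to `k`). -/
noncomputable def pathEdges (n : ℕ) (par : Fin (n + 1) → Fin (n + 1))
    (j : Fin (n + 1)) : Finset (Fin (n + 1)) :=
  @Finset.filter _
    (fun k => k ≠ 0 ∧ ∃ m ∈ Finset.range (n + 1), par^[m] j = k)
    (Classical.decPred _) Finset.univ

namespace S17aux

variable {n : ℕ} {par : Fin (n + 1) → Fin (n + 1)}

theorem iter_zero (hroot : par 0 = 0) (m : ℕ) : par^[m] 0 = 0 :=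
  Function.iterate_fixed hroot m

noncomputable def dep (hreach : ∀ j, ∃ m : ℕ, par^[m] j = 0) (j : Fin (n + 1)) : ℕ :=
  Nat.find (hreach j)

theorem dep_spec (hreach : ∀ j, ∃ m : ℕ, par^[m] j = 0) (j : Fin (n + 1)) :
    par^[dep hreach j] j = 0 := Nat.find_spec (hreach j)

theorem dep_min (hreach : ∀ j, ∃ m : ℕ, par^[m] j = 0) {j : Fin (n + 1)} {m : ℕ}
    (h : m < dep hreach j) : par^[m] j ≠ 0 := Nat.find_min (hreach j) h

theorem iter_dep_le (hroot : par 0 = 0) (hreach : ∀ j, ∃ m : ℕ, par^[m] j = 0)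
    {j : Fin (n + 1)} {t : ℕ} (h : dep hreach j ≤ t) : par^[t] j = 0 := by
  have h2 : par^[(t - dep hreach j) + dep hreach j] j = 0 := by
    rw [Function.iterate_add_apply, dep_spec]
    exact iter_zero hroot _
  rwa [Nat.sub_add_cancel h] at h2

theorem dep_pos (hreach : ∀ j, ∃ m : ℕ, par^[m] j = 0) {j : Fin (n + 1)}
    (hj : j ≠ 0) : 0 < dep hreach j := by
  rcases Nat.eq_zero_or_pos (dep hreach j) with h | h
  · exfalso; apply hj
    have := dep_spec hreach j
    rwa [h, Function.iterate_zero_apply] at this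
  · exact h

theorem dep_par (hroot : par 0 = 0) (hreach : ∀ j, ∃ m : ℕ, par^[m] j = 0)
    {j : Fin (n + 1)} (hj : j ≠ 0) : dep hreach (par j) < dep hreach j := by
  have hpos := dep_pos hreach hj
  obtain ⟨m, hm⟩ : ∃ m, dep hreach j = m + 1 := ⟨dep hreach j - 1, by omega⟩
  have h1 : par^[m] (par j) = 0 := by
    have := dep_spec hreach j
    rwa [hm, Function.iterate_succ_apply] at this
  have h2 : dep hreach (par j) ≤ m := Nat.find_le h1
  omega

theorem nocycle (hroot : par 0 = 0) (hreach : ∀ j, ∃ m : ℕ, par^[m] j = 0)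
    {j : Fin (n + 1)} (hj : j ≠ 0) (m : ℕ) : par^[m + 1] j ≠ j := by
  intro h
  have h2 : ∀ c, par^[(m + 1) * c] j = j := by
    intro c
    rw [Function.iterate_mul]
    exact Function.iterate_fixed h c
  have h3 : par^[(m + 1) * dep hreach j] j = 0 :=
    iter_dep_le hroot hreach (Nat.le_mul_of_pos_left _ (Nat.succ_pos m))
  rw [h2] at h3
  exact hj h3

theorem dep_le (hroot : par 0 = 0) (hreach : ∀ j, ∃ m : ℕ, par^[m] j = 0)
    (j : Fin (n + 1)) : dep hreach j ≤ n := by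
  by_contra h
  push_neg at h
  have H : ∀ a b : ℕ, a < b → b ≤ n + 1 → par^[a] j ≠ par^[b] j := by
    intro a b hab hb heq
    have hu : par^[a] j ≠ 0 := dep_min hreach (by omega)
    have hcyc : par^[(b - a)] (par^[a] j) = par^[a] j := by
      rw [← Function.iterate_add_apply]
      rw [show b - a + a = b by omega]
      exact heq.symm
    obtain ⟨c, hc⟩ : ∃ c, b - a = c + 1 := ⟨b - a - 1, by omega⟩
    rw [hc] at hcyc
    exact nocycle hroot hreach hu c hcyc
  have inj : Function.Injective (fun a : Fin (n + 2) => par^[(a : ℕ)] j) := by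
    intro a b hab
    by_contra hne
    rcases lt_trichotomy (a : ℕ) (b : ℕ) with hlt | heq | hgt
    · exact H _ _ hlt (by omega) hab
    · exact hne (Fin.ext heq)
    · exact H _ _ hgt (by omega) hab.symm
  have := Fintype.card_le_of_injective _ inj
  simp [Fintype.card_fin] at this

theorem mem_pathEdges (hroot : par 0 = 0) (hreach : ∀ j, ∃ m : ℕ, par^[m] j = 0)
    {j k : Fin (n + 1)} :
    k ∈ pathEdges n par j ↔ k ≠ 0 ∧ ∃ m : ℕ, par^[m] j = k := by
  simp only [pathEdges, Finset.mem_filter, Finset.mem_univ, true_and, Finset.mem_range]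
  constructor
  · rintro ⟨hk, m, _, hm⟩; exact ⟨hk, m, hm⟩
  · rintro ⟨hk, m, hm⟩
    refine ⟨hk, m, ?_, hm⟩
    have hmd : m < dep hreach j := by
      by_contra hc
      push_neg at hc
      have h0 : par^[m] j = 0 := iter_dep_le hroot hreach hc
      rw [hm] at h0
      exact hk h0
    have := dep_le hroot hreach j
    omega

theorem pathEdges_zero (hroot : par 0 = 0) (hreach : ∀ j, ∃ m : ℕ, par^[m] j = 0) :
    pathEdges n par 0 = ∅ := by
  rw [Finset.eq_empty_iff_forall_notMem]
  intro k hk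
  rw [mem_pathEdges hroot hreach] at hk
  obtain ⟨hk0, m, hm⟩ := hk
  rw [iter_zero hroot m] at hm
  exact hk0 hm.symm

theorem notMem_parent (hroot : par 0 = 0) (hreach : ∀ j, ∃ m : ℕ, par^[m] j = 0)
    {j : Fin (n + 1)} (hj : j ≠ 0) : j ∉ pathEdges n par (par j) := by
  intro h
  rw [mem_pathEdges hroot hreach] at h
  obtain ⟨-, m, hm⟩ := h
  exact nocycle hroot hreach hj m (by rw [Function.iterate_succ_apply]; exact hm)

theorem pathEdges_succ (hroot : par 0 = 0) (hreach : ∀ j, ∃ m : ℕ, par^[m] j = 0)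
    {j : Fin (n + 1)} (hj : j ≠ 0) :
    pathEdges n par j = insert j (pathEdges n par (par j)) := by
  ext k
  rw [mem_pathEdges hroot hreach, Finset.mem_insert, mem_pathEdges hroot hreach]
  constructor
  · rintro ⟨hk, m, hm⟩
    match m, hm with
    | 0, hm => exact Or.inl hm.symm
    | (m + 1), hm =>
      exact Or.inr ⟨hk, m, by rwa [Function.iterate_succ_apply] at hm⟩
  · rintro (rfl | ⟨hk, m, hm⟩)
    · exact ⟨hj, 0, rfl⟩
    · exact ⟨hk, m + 1, by rwa [Function.iterate_succ_apply]⟩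

/-- Downstream set of `j`: all vertices whose path to the root passes through `j`. -/
noncomputable def Dset (n : ℕ) (par : Fin (n + 1) → Fin (n + 1))
    (j : Fin (n + 1)) : Finset (Fin (n + 1)) :=
  @Finset.filter _ (fun i => ∃ m : ℕ, par^[m] i = j)
    (Classical.decPred _) Finset.univ

theorem mem_Dset {j i : Fin (n + 1)} :
    i ∈ Dset n par j ↔ ∃ m : ℕ, par^[m] i = j := by
  simp only [Dset, Finset.mem_filter, Finset.mem_univ, true_and]

theorem notMem_Dset_child (hroot : par 0 = 0) (hreach : ∀ j, ∃ m : ℕ, par^[m] j = 0)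
    {j k : Fin (n + 1)} (hj : j ≠ 0) (hk : par k = j) : j ∉ Dset n par k := by
  intro h
  rw [mem_Dset] at h
  obtain ⟨m, hm⟩ := h
  apply nocycle hroot hreach hj m
  rw [Function.iterate_succ_apply', hm, hk]

theorem Dset_children_disjoint (hroot : par 0 = 0)
    (hreach : ∀ j, ∃ m : ℕ, par^[m] j = 0) {j : Fin (n + 1)} (hj : j ≠ 0)
    {k k' : Fin (n + 1)} (hk : par k = j) (hk' : par k' = j) (hne : k ≠ k') :
    Disjoint (Dset n par k) (Dset n par k') := by
  rw [Finset.disjoint_left]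
  intro i hik hik'
  rw [mem_Dset] at hik hik'
  obtain ⟨a, ha⟩ := hik
  obtain ⟨b, hb⟩ := hik'
  have H : ∀ (u u' : Fin (n + 1)) (a b : ℕ), a ≤ b → par u = j → par u' = j →
      par^[a] i = u → par^[b] i = u' → u = u' := by
    intro u u' a b hab hu hu' ha hb
    have hb2 : par^[(b - a)] u = u' := by
      rw [← ha, ← Function.iterate_add_apply]
      rw [show b - a + a = b by omega]
      exact hb
    rcases Nat.eq_zero_or_pos (b - a) with h0 | h0
    · rw [h0, Function.iterate_zero_apply] at hb2; exact hb2
    · exfalso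
      obtain ⟨c, hc⟩ : ∃ c, b - a = c + 1 := ⟨b - a - 1, by omega⟩
      rw [hc, Function.iterate_succ_apply, hu] at hb2
      apply nocycle hroot hreach hj c
      rw [Function.iterate_succ_apply', hb2, hu']
  rcases le_total a b with hab | hab
  · exact hne (H k k' a b hab hk hk' ha hb)
  · exact hne (H k' k b a hab hk' hk hb ha).symm

theorem Dset_eq (hroot : par 0 = 0) (hreach : ∀ j, ∃ m : ℕ, par^[m] j = 0)
    {j : Fin (n + 1)} (hj : j ≠ 0) :
    Dset n par j = insert j
      ((Finset.univ.filter (fun k : Fin (n + 1) => k ≠ 0 ∧ par k = j)).biUnion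
        (Dset n par)) := by
  ext i
  rw [mem_Dset, Finset.mem_insert, Finset.mem_biUnion]
  constructor
  · rintro ⟨m, hm⟩
    match m, hm with
    | 0, hm => exact Or.inl (by simpa using hm)
    | (m + 1), hm =>
      refine Or.inr ⟨par^[m] i, ?_, ?_⟩
      · rw [Finset.mem_filter]
        refine ⟨Finset.mem_univ _, ?_, ?_⟩
        · intro h0
          rw [Function.iterate_succ_apply', h0, hroot] at hm
          exact hj hm.symm
        · rwa [Function.iterate_succ_apply'] at hm
      · rw [mem_Dset]; exact ⟨m, rfl⟩
  · rintro (rfl | ⟨k, hk, hik⟩)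
    · exact ⟨0, rfl⟩
    · rw [Finset.mem_filter] at hk
      rw [mem_Dset] at hik
      obtain ⟨m, hm⟩ := hik
      exact ⟨m + 1, by rw [Function.iterate_succ_apply', hm, hk.2.2]⟩

theorem root_notMem_Dset (hroot : par 0 = 0) {k : Fin (n + 1)} (hk : k ≠ 0) :
    (0 : Fin (n + 1)) ∉ Dset n par k := by
  intro h
  rw [mem_Dset] at h
  obtain ⟨m, hm⟩ := h
  rw [iter_zero hroot m] at hm
  exact hk hm.symm

theorem Dset_eq_filter (hroot : par 0 = 0) (hreach : ∀ j, ∃ m : ℕ, par^[m] j = 0)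
    {k : Fin (n + 1)} (hk : k ≠ 0) :
    Dset n par k = (Finset.univ.filter (fun i : Fin (n + 1) => i ≠ 0)).filter
      (fun i => k ∈ pathEdges n par i) := by
  ext i
  rw [mem_Dset, Finset.mem_filter, Finset.mem_filter]
  simp only [Finset.mem_univ, true_and]
  rw [mem_pathEdges hroot hreach]
  constructor
  · rintro ⟨m, hm⟩
    refine ⟨?_, hk, m, hm⟩
    rintro rfl
    rw [iter_zero hroot m] at hm
    exact hk hm.symm
  · rintro ⟨-, -, m, hm⟩
    exact ⟨m, hm⟩

/-- Closed form for the line flows. -/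
theorem flow_closed (hroot : par 0 = 0) (hreach : ∀ j, ∃ m : ℕ, par^[m] j = 0)
    (p pf : Fin (n + 1) → ℝ)
    (hcons : ∀ j : Fin (n + 1), j ≠ 0 →
      -p j = pf j - ∑ k ∈ Finset.univ.filter
        (fun k : Fin (n + 1) => k ≠ 0 ∧ par k = j), pf k) :
    ∀ j : Fin (n + 1), j ≠ 0 → pf j = -(∑ i ∈ Dset n par j, p i) := by
  suffices h : ∀ t : ℕ, ∀ j : Fin (n + 1), j ≠ 0 → n - dep hreach j ≤ t →
      pf j = -(∑ i ∈ Dset n par j, p i) by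
    intro j hj
    exact h (n - dep hreach j) j hj le_rfl
  intro t
  induction t using Nat.strong_induction_on with
  | _ t ih =>
    intro j hj hle
    have hch : ∀ k ∈ Finset.univ.filter
        (fun k : Fin (n + 1) => k ≠ 0 ∧ par k = j),
        pf k = -(∑ i ∈ Dset n par k, p i) := by
      intro k hkmem
      rw [Finset.mem_filter] at hkmem
      obtain ⟨-, hk0, hpk⟩ := hkmem
      have hdk : dep hreach j < dep hreach k := by
        have := dep_par hroot hreach hk0
        rwa [hpk] at this
      have hdkn : dep hreach k ≤ n := dep_le hroot hreach k
      exact ih (n - dep hreach k) (by omega) k hk0 le_rfl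
    have h1 := hcons j hj
    rw [Finset.sum_congr rfl hch] at h1
    rw [Finset.sum_neg_distrib] at h1
    have h2 : ∑ i ∈ Dset n par j, p i = p j +
        ∑ k ∈ Finset.univ.filter (fun k : Fin (n + 1) => k ≠ 0 ∧ par k = j),
          ∑ i ∈ Dset n par k, p i := by
      rw [Dset_eq hroot hreach hj, Finset.sum_insert, Finset.sum_biUnion]
      · intro k hk k' hk' hne
        simp only [Finset.coe_filter, Finset.mem_univ, Set.mem_setOf_eq,
          true_and] at hk hk'
        exact Dset_children_disjoint hroot hreach hj hk.2 hk'.2 hne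
      · rw [Finset.mem_biUnion]
        rintro ⟨k, hk, hjk⟩
        rw [Finset.mem_filter] at hk
        exact notMem_Dset_child hroot hreach hj hk.2.2 hjk
    rw [h2]
    linarith

/-- Telescoped voltage equation along the path. -/
theorem volt_closed (hroot : par 0 = 0) (hreach : ∀ j, ∃ m : ℕ, par^[m] j = 0)
    (r x pf qf w : Fin (n + 1) → ℝ)
    (hvolt : ∀ j : Fin (n + 1), j ≠ 0 →
      w j = w (par j) - 2 * (r j * pf j + x j * qf j)) :
    ∀ j : Fin (n + 1),
      w j = w 0 - 2 * ∑ k ∈ pathEdges n par j, (r k * pf k + x k * qf k) := by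
  suffices h : ∀ t : ℕ, ∀ j : Fin (n + 1), dep hreach j ≤ t →
      w j = w 0 - 2 * ∑ k ∈ pathEdges n par j, (r k * pf k + x k * qf k) by
    intro j
    exact h (dep hreach j) j le_rfl
  intro t
  induction t with
  | zero =>
    intro j hj
    have hj0 : j = 0 := by
      have h := dep_spec hreach j
      rw [Nat.le_zero.mp hj, Function.iterate_zero_apply] at h
      exact h
    subst hj0
    rw [pathEdges_zero hroot hreach]
    simp
  | succ t ih =>
    intro j hj
    by_cases h0 : j = 0
    · subst h0
      rw [pathEdges_zero hroot hreach]
      simp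
    · have hd := dep_par hroot hreach (j := j) h0
      rw [hvolt j h0, ih (par j) (by omega),
        pathEdges_succ hroot hreach h0,
        Finset.sum_insert (notMem_parent hroot hreach h0)]
      ring

end S17aux

open S17aux in
/-- closed-form linearized Distflow voltage equation, Eq. (8):
in a finite rooted tree with root `0`, if the line flows `pf, qf` (indexed by
the child endpoint of each edge) satisfy the conservation equations and the
squared voltage magnitudes `w` satisfy the edgewise voltage recursion, then
`w_j = w_0 + Σ_{i=1}^{n} (R_{ji} p_i + X_{ji} q_i)` for every nonroot `j`,
where `R_{ji} = 2 Σ_{(h,k) ∈ P_j ∩ P_i} r_{hk}` and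
`X_{ji} = 2 Σ_{(h,k) ∈ P_j ∩ P_i} x_{hk}`. -/
theorem statement_17 (n : ℕ) (par : Fin (n + 1) → Fin (n + 1))
    (hroot : par 0 = 0)
    (hreach : ∀ j, ∃ m : ℕ, par^[m] j = 0)
    (r x p q pf qf w : Fin (n + 1) → ℝ)
    (hconsP : ∀ j : Fin (n + 1), j ≠ 0 →
      -p j = pf j - ∑ k ∈ Finset.univ.filter
        (fun k : Fin (n + 1) => k ≠ 0 ∧ par k = j), pf k)
    (hconsQ : ∀ j : Fin (n + 1), j ≠ 0 →
      -q j = qf j - ∑ k ∈ Finset.univ.filter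
        (fun k : Fin (n + 1) => k ≠ 0 ∧ par k = j), qf k)
    (hvolt : ∀ j : Fin (n + 1), j ≠ 0 →
      w j = w (par j) - 2 * (r j * pf j + x j * qf j)) :
    ∀ j : Fin (n + 1), j ≠ 0 →
      w j = w 0 + ∑ i ∈ Finset.univ.filter (fun i : Fin (n + 1) => i ≠ 0),
        ((2 * ∑ k ∈ pathEdges n par j ∩ pathEdges n par i, r k) * p i
          + (2 * ∑ k ∈ pathEdges n par j ∩ pathEdges n par i, x k) * q i) := by
  intro j hj
  have flowP := flow_closed hroot hreach p pf hconsP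
  have flowQ := flow_closed hroot hreach q qf hconsQ
  rw [volt_closed hroot hreach r x pf qf w hvolt j]
  set T : Finset (Fin (n + 1)) :=
    Finset.univ.filter (fun i : Fin (n + 1) => i ≠ 0) with hT
  have main_swap : ∑ k ∈ pathEdges n par j, (r k * pf k + x k * qf k)
      = -∑ i ∈ T, ((∑ k ∈ pathEdges n par j ∩ pathEdges n par i, r k) * p i
          + (∑ k ∈ pathEdges n par j ∩ pathEdges n par i, x k) * q i) := by
    rw [← Finset.sum_neg_distrib]
    calc ∑ k ∈ pathEdges n par j, (r k * pf k + x k * qf k)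
        = ∑ k ∈ pathEdges n par j, ∑ i ∈ T,
            (if k ∈ pathEdges n par i then -(r k * p i + x k * q i) else 0) := by
          refine Finset.sum_congr rfl fun k hk => ?_
          have hk0 : k ≠ 0 := ((mem_pathEdges hroot hreach).1 hk).1
          have hsum : ∀ f : Fin (n + 1) → ℝ,
              ∑ i ∈ (Finset.univ.filter (fun i : Fin (n + 1) => i ≠ 0)).filter
                  (fun i => k ∈ pathEdges n par i), f i
                = ∑ i ∈ T, if k ∈ pathEdges n par i then f i else 0 := by
            intro f
            rw [hT]
            exact Finset.sum_filter _ _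
          rw [flowP k hk0, flowQ k hk0, Dset_eq_filter hroot hreach hk0,
            hsum p, hsum q]
          rw [mul_neg, mul_neg, Finset.mul_sum, Finset.mul_sum,
            ← Finset.sum_neg_distrib, ← Finset.sum_neg_distrib,
            ← Finset.sum_add_distrib]
          refine Finset.sum_congr rfl fun i _ => ?_
          by_cases h : k ∈ pathEdges n par i <;> simp [h] <;> ring
      _ = ∑ i ∈ T, ∑ k ∈ pathEdges n par j,
            (if k ∈ pathEdges n par i then -(r k * p i + x k * q i) else 0) :=
          Finset.sum_comm
      _ = ∑ i ∈ T, -((∑ k ∈ pathEdges n par j ∩ pathEdges n par i, r k) * p i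
            + (∑ k ∈ pathEdges n par j ∩ pathEdges n par i, x k) * q i) := by
          refine Finset.sum_congr rfl fun i _ => ?_
          rw [← Finset.sum_filter]
          have hfi : (pathEdges n par j).filter (fun k => k ∈ pathEdges n par i)
              = pathEdges n par j ∩ pathEdges n par i := by
            ext k
            simp [Finset.mem_filter, Finset.mem_inter]
          rw [hfi, Finset.sum_neg_distrib, Finset.sum_add_distrib,
            ← Finset.sum_mul, ← Finset.sum_mul]
  rw [main_swap]
  have hfin : ∑ i ∈ T,
      ((2 * ∑ k ∈ pathEdges n par j ∩ pathEdges n par i, r k) * p i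
        + (2 * ∑ k ∈ pathEdges n par j ∩ pathEdges n par i, x k) * q i)
      = 2 * ∑ i ∈ T,
      ((∑ k ∈ pathEdges n par j ∩ pathEdges n par i, r k) * p i
        + (∑ k ∈ pathEdges n par j ∩ pathEdges n par i, x k) * q i) := by
    rw [Finset.mul_sum]
    exact Finset.sum_congr rfl fun i _ => by ring
  rw [hfin]
  ring
end
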